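/- arXiv:2004.12285 — 4 statements merged into one kernel-verified Lean document; each statement's English description precedes it below -/
import Mathlib

section
/- Let d ≡ 3 mod 4 and q ≡ 3 mod 4. Let P be a finite set of points in F_q^d and S a finite set of spheres of square radii in F_q^d (each sphere given by a center a ∈ F_q^d and a radius r² with r ∈ F_q). If |P|, |S| ≤ N, then the number of incidences I(P,S) = #{(p,s) ∈ P×S : p lies on s} satisfies I(P,S) ≤ C(N²/q + q^{(d-1)/2}N) for an absolute constant C (in fact one may take I(P,S) ≤ 4(N²/q + q^{(d-1)/2}N)). -/
open Finset BigOperators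

namespace PSIAux

variable {F : Type*} [Field F] [Fintype F] [DecidableEq F]

noncomputable def ψ (F : Type*) [Field F] [Fintype F] : AddChar F ℂ :=
  AddChar.FiniteField.primitiveChar_to_Complex F

lemma ψ_prim : (ψ F).IsPrimitive := AddChar.FiniteField.primitiveChar_to_Complex_isPrimitive F

noncomputable def χ (F : Type*) [Field F] [Fintype F] [DecidableEq F] : MulChar F ℂ :=
  (quadraticChar F).ringHomComp (Int.castRingHom ℂ)

noncomputable def g (F : Type*) [Field F] [Fintype F] [DecidableEq F] : ℂ :=
  gaussSum (χ F) (ψ F)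

lemma ringChar_ne_two (hq : Fintype.card F % 4 = 3) : ringChar F ≠ 2 := by
  intro h
  have := FiniteField.even_card_of_char_two h
  omega

lemma psi_sum {ι : Type*} (s : Finset ι) (h : ι → F) :
    ψ F (∑ i ∈ s, h i) = ∏ i ∈ s, ψ F (h i) := by
  classical
  induction s using Finset.cons_induction with
  | empty => simp
  | cons a s ha ih =>
      rw [Finset.sum_cons, Finset.prod_cons, AddChar.map_add_eq_mul, ih]

lemma conj_psi (x : F) : (starRingEnd ℂ) (ψ F x) = ψ F (-x) := by
  have h : (0 : ℕ) < ringChar F := Nat.pos_of_ne_zero (CharP.ringChar_ne_zero_of_finite F)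
  rw [AddChar.starComp_apply h, AddChar.inv_apply]

lemma sum_psi_mul (b : F) :
    ∑ s : F, ψ F (s * b) = if b = 0 then (Fintype.card F : ℂ) else 0 := by
  have := AddChar.sum_mulShift b (ψ_prim (F := F))
  rw [this]
  split <;> simp

lemma sum_psi_mul_ne (c : F) :
    ∑ s ∈ univ.filter (fun s : F => s ≠ 0), ψ F (s * c)
      = (if c = 0 then (Fintype.card F : ℂ) else 0) - 1 := by
  have h := sum_psi_mul (F := F) c
  rw [← Finset.sum_filter_add_sum_filter_not univ (fun s : F => s ≠ 0)] at h
  have h2 : univ.filter (fun s : F => ¬ s ≠ 0) = {0} := by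
    ext x; simp
  rw [h2] at h
  rw [← h]
  push_cast
  ring_nf
  simp [Finset.filter_congr (fun x _ => by tauto), mul_comm]

end PSIAux

namespace PSIAux2
open PSIAux
set_option linter.unusedSectionVars false

variable {F : Type*} [Field F] [Fintype F] [DecidableEq F]

lemma chi_apply (t : F) : χ F t = ((quadraticChar F t : ℤ) : ℂ) := rfl

lemma chi_sq_one {α : F} (hα : α ≠ 0) : χ F α * χ F α = 1 := by
  rw [chi_apply, ← Int.cast_mul, ← sq, quadraticChar_sq_one hα, Int.cast_one]

lemma sum_psi_sq (hq : Fintype.card F % 4 = 3) {α : F} (hα : α ≠ 0) :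
    ∑ u : F, ψ F (α * u ^ 2) = χ F α * g F := by
  have hF2 : ringChar F ≠ 2 := ringChar_ne_two hq
  have step1 : ∑ u : F, ψ F (α * u ^ 2)
      = ∑ t : F, ((univ.filter (fun u : F => u ^ 2 = t)).card : ℂ) * ψ F (α * t) := by
    rw [← Finset.sum_fiberwise univ (fun u : F => u ^ 2) (fun u => ψ F (α * u ^ 2))]
    refine Finset.sum_congr rfl fun t _ => ?_
    have hcong : ∀ u ∈ univ.filter (fun u : F => u ^ 2 = t), ψ F (α * u ^ 2) = ψ F (α * t) := by
      intro u hu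
      simp only [Finset.mem_filter] at hu
      rw [hu.2]
    rw [Finset.sum_congr rfl hcong, Finset.sum_const, nsmul_eq_mul]
  have step2 : ∀ t : F, ((univ.filter (fun u : F => u ^ 2 = t)).card : ℂ) = χ F t + 1 := by
    intro t
    have h := quadraticChar_card_sqrts hF2 t
    have h2 : {x : F | x ^ 2 = t}.toFinset = univ.filter (fun u : F => u ^ 2 = t) := by
      ext x; simp
    rw [h2] at h
    rw [chi_apply]
    exact_mod_cast congrArg (fun n : ℤ => (n : ℂ)) h
  simp only [step1, step2, add_mul, one_mul, Finset.sum_add_distrib]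
  have h0 : ∑ t : F, ψ F (α * t) = 0 := by
    have := sum_psi_mul (F := F) α
    rw [if_neg hα] at this
    rw [← this]
    exact Finset.sum_congr rfl fun t _ => by rw [mul_comm]
  rw [h0, add_zero]
  have hg : ∑ t : F, χ F t * ψ F (α * t) = gaussSum (χ F) ((ψ F).mulShift α) := by
    unfold gaussSum
    exact Finset.sum_congr rfl fun t _ => by rw [AddChar.mulShift_apply]
  rw [hg]
  have hms := gaussSum_mulShift (χ F) (ψ F) (Units.mk0 α hα)
  simp only [Units.val_mk0] at hms
  have : χ F α * (χ F α * gaussSum (χ F) ((ψ F).mulShift α)) = χ F α * gaussSum (χ F) (ψ F) := by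
    rw [hms]
  rwa [← mul_assoc, chi_sq_one hα, one_mul] at this

lemma chi_ne_one : ringChar F ≠ 2 → χ F ≠ 1 := by
  intro hF2 h
  apply quadraticChar_ne_one hF2
  have hinj : Function.Injective (Int.castRingHom ℂ) := fun a b hab => Int.cast_injective (α := ℂ) hab
  exact MulChar.injective_ringHomComp (R := F) hinj (h.trans (MulChar.ringHomComp_one _).symm)

lemma chi_neg_one (hq : Fintype.card F % 4 = 3) : χ F (-1) = -1 := by
  have hF2 : ringChar F ≠ 2 := ringChar_ne_two hq
  rw [chi_apply, quadraticChar_neg_one hF2, ZMod.χ₄_nat_eq_if_mod_four]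
  have h2 : Fintype.card F % 2 = 1 := by omega
  rw [if_neg (by omega), if_neg (by omega)]
  norm_num

lemma g_sq (hq : Fintype.card F % 4 = 3) : g F ^ 2 = -(Fintype.card F : ℂ) := by
  have hF2 : ringChar F ≠ 2 := ringChar_ne_two hq
  have h := gaussSum_sq (chi_ne_one hF2) ((quadraticChar_isQuadratic F).comp _) (ψ_prim (F := F))
  unfold g
  rw [h, chi_neg_one hq]
  ring

lemma g_pow (hq : Fintype.card F % 4 = 3) {d : ℕ} (hd : d % 4 = 3) :
    g F ^ (d + 1) = (Fintype.card F : ℂ) ^ ((d + 1) / 2) := by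
  obtain ⟨k, hk⟩ : ∃ k, d = 4 * k + 3 := ⟨d / 4, by omega⟩
  have h1 : d + 1 = 2 * ((d + 1) / 2) := by omega
  have h2 : Even ((d + 1) / 2) := by subst hk; exact ⟨k + 1, by omega⟩
  calc g F ^ (d + 1) = (g F ^ 2) ^ ((d + 1) / 2) := by rw [← pow_mul, ← h1]
    _ = (-(Fintype.card F : ℂ)) ^ ((d + 1) / 2) := by rw [g_sq hq]
    _ = (Fintype.card F : ℂ) ^ ((d + 1) / 2) := h2.neg_pow _

end PSIAux2

namespace PSIVec
open PSIAux PSIAux2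
set_option linter.unusedSectionVars false

variable {F : Type*} [Field F] [Fintype F] [DecidableEq F] {d : ℕ}

/-- The quadratic form `Q(x) - y²` on `F^d × F`. -/
def Q' (v : (Fin d → F) × F) : F := (∑ i, v.1 i ^ 2) - v.2 ^ 2

/-- The associated bilinear pairing. -/
def mm (ξ v : (Fin d → F) × F) : F := (∑ i, ξ.1 i * v.1 i) - ξ.2 * v.2

lemma mm_sub_right (ξ v w : (Fin d → F) × F) : mm ξ v - mm ξ w = mm ξ (v - w) := by
  simp only [mm, Prod.fst_sub, Prod.snd_sub, Pi.sub_apply]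
  have h : ∑ i, ξ.1 i * (v.1 i - w.1 i) = (∑ i, ξ.1 i * v.1 i) - ∑ i, ξ.1 i * w.1 i := by
    rw [← Finset.sum_sub_distrib]
    exact Finset.sum_congr rfl fun i _ => by ring
  rw [h]
  ring

lemma key_alg (s c : F) (ξ v : (Fin d → F) × F) :
    s * Q' (ξ + c • v) + mm (ξ + c • v) v
      = s * Q' ξ + (2 * s * c + 1) * mm ξ v + (s * c ^ 2 + c) * Q' v := by
  simp only [Q', mm, Prod.fst_add, Prod.snd_add, Prod.smul_fst, Prod.smul_snd, Pi.add_apply,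
    Pi.smul_apply, smul_eq_mul]
  have e1 : ∑ i, (ξ.1 i + c * v.1 i) ^ 2
      = (∑ i, ξ.1 i ^ 2) + 2 * c * (∑ i, ξ.1 i * v.1 i) + c ^ 2 * ∑ i, v.1 i ^ 2 := by
    rw [Finset.mul_sum, Finset.mul_sum, ← Finset.sum_add_distrib, ← Finset.sum_add_distrib]
    exact Finset.sum_congr rfl fun i _ => by ring
  have e2 : ∑ i, (ξ.1 i + c * v.1 i) * v.1 i
      = (∑ i, ξ.1 i * v.1 i) + c * ∑ i, v.1 i ^ 2 := by
    rw [Finset.mul_sum, ← Finset.sum_add_distrib]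
    exact Finset.sum_congr rfl fun i _ => by ring
  rw [e1, e2]
  ring

lemma sumQ (hq : Fintype.card F % 4 = 3) (hd : d % 4 = 3) {α : F} (hα : α ≠ 0) :
    ∑ v : (Fin d → F) × F, ψ F (α * Q' v)
      = -(Fintype.card F : ℂ) ^ ((d + 1) / 2) := by
  have hsplit : ∀ v : (Fin d → F) × F,
      ψ F (α * Q' v) = (∏ i, ψ F (α * v.1 i ^ 2)) * ψ F (-α * v.2 ^ 2) := by
    intro v
    rw [← psi_sum, ← AddChar.map_add_eq_mul, ← Finset.mul_sum]
    congr 1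
    simp only [Q']
    ring
  simp only [hsplit]
  rw [Fintype.sum_prod_type]
  simp only [← Finset.sum_mul]
  rw [← Finset.sum_mul_sum]
  have h1 : ∑ x : Fin d → F, ∏ i, ψ F (α * x i ^ 2) = ∏ _i : Fin d, ∑ u : F, ψ F (α * u ^ 2) := by
    have := Finset.prod_univ_sum (fun _ : Fin d => (univ : Finset F))
      (fun _ u => ψ F (α * u ^ 2))
    rw [Fintype.piFinset_univ] at this
    exact this.symm
  have hneg : (-α : F) ≠ 0 := neg_ne_zero.mpr hα
  rw [h1, Finset.prod_const, sum_psi_sq hq hα, sum_psi_sq hq hneg, Finset.card_univ,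
    Fintype.card_fin]
  have hχneg : χ F (-α) = χ F (-1) * χ F α := by
    rw [← map_mul]
    norm_num
  rw [hχneg, chi_neg_one hq]
  have hd1 : d + 1 = 2 * ((d + 1) / 2) := by omega
  have hx : χ F α ^ 2 = 1 := by rw [pow_two]; exact chi_sq_one hα
  calc (χ F α * g F) ^ d * (-1 * χ F α * g F)
      = -(χ F α ^ (d + 1) * g F ^ (d + 1)) := by
        rw [mul_pow, pow_succ, pow_succ]; ring
    _ = -(g F ^ (d + 1)) := by
        rw [hd1, pow_mul, hx, one_pow, one_mul]
    _ = -(Fintype.card F : ℂ) ^ ((d + 1) / 2) := by rw [g_pow hq hd]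

end PSIVec

namespace PSIVec2
open PSIAux PSIAux2 PSIVec
set_option linter.unusedSectionVars false

variable {F : Type*} [Field F] [Fintype F] [DecidableEq F] {d : ℕ}

lemma two_ne_zero' (hF2 : ringChar F ≠ 2) : (2 : F) ≠ 0 := by
  intro h
  have := CharP.ringChar_of_prime_eq_zero Nat.prime_two h
  exact hF2 this

lemma four_ne_zero (hF2 : ringChar F ≠ 2) : (4 : F) ≠ 0 := by
  have h2 := two_ne_zero' hF2
  have : (4 : F) = 2 * 2 := by norm_num
  rw [this]
  exact mul_ne_zero h2 h2

/-- Sum of `ψ (mm ξ v)` over all `ξ`. -/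
lemma sum_mm (v : (Fin d → F) × F) :
    ∑ ξ : (Fin d → F) × F, ψ F (mm ξ v)
      = if v = 0 then (Fintype.card F : ℂ) ^ (d + 1) else 0 := by
  have hsplit : ∀ ξ : (Fin d → F) × F,
      ψ F (mm ξ v) = (∏ i, ψ F (ξ.1 i * v.1 i)) * ψ F (ξ.2 * (-v.2)) := by
    intro ξ
    rw [← psi_sum, ← AddChar.map_add_eq_mul]
    congr 1
    simp only [mm]
    ring
  simp only [hsplit]
  rw [Fintype.sum_prod_type]
  simp only [← Finset.sum_mul]
  rw [← Finset.sum_mul_sum]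
  have h1 : ∑ x : Fin d → F, ∏ i, ψ F (x i * v.1 i)
      = ∏ i : Fin d, ∑ u : F, ψ F (u * v.1 i) := by
    have := Finset.prod_univ_sum (fun _ : Fin d => (univ : Finset F))
      (fun i u => ψ F (u * v.1 i))
    rw [Fintype.piFinset_univ] at this
    exact this.symm
  rw [h1]
  simp only [sum_psi_mul]
  by_cases h : v = 0
  · subst h
    simp [Finset.prod_const, ← pow_succ]
  · rw [if_neg h]
    by_cases h2 : v.2 = 0
    · -- then some coordinate of v.1 is nonzero
      have h1ne : v.1 ≠ 0 := by
        intro h1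
        exact h (Prod.ext_iff.mpr ⟨h1, h2⟩)
      obtain ⟨i, hi⟩ : ∃ i, v.1 i ≠ 0 := by
        by_contra hno
        push_neg at hno
        exact h1ne (funext fun i => hno i)
      rw [Finset.prod_eq_zero (Finset.mem_univ i) (by rw [if_neg hi]), zero_mul]
    · rw [if_neg (fun hh : -v.2 = 0 => h2 (neg_eq_zero.mp hh)), mul_zero]

/-- reindexing the nonzero sum by the involution `s ↦ -(4s)⁻¹`. -/
lemma sum_sigma (hF2 : ringChar F ≠ 2) (c : F) :
    ∑ s ∈ univ.filter (fun s : F => s ≠ 0), ψ F (-(4 * s)⁻¹ * c)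
      = (if c = 0 then (Fintype.card F : ℂ) else 0) - 1 := by
  rw [← sum_psi_mul_ne (F := F) c]
  have h4 := four_ne_zero hF2
  refine Finset.sum_nbij' (i := fun s => -(4 * s)⁻¹) (j := fun s => -(4 * s)⁻¹) ?_ ?_ ?_ ?_ ?_
  · intro a ha
    simp only [Finset.mem_filter, Finset.mem_univ, true_and] at ha ⊢
    intro hcon
    rw [neg_eq_zero, inv_eq_zero] at hcon
    exact (mul_ne_zero h4 ha) hcon
  · intro a ha
    simp only [Finset.mem_filter, Finset.mem_univ, true_and] at ha ⊢
    intro hcon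
    rw [neg_eq_zero, inv_eq_zero] at hcon
    exact (mul_ne_zero h4 ha) hcon
  · intro a ha
    simp only [Finset.mem_filter, Finset.mem_univ, true_and] at ha
    field_simp
  · intro a ha
    simp only [Finset.mem_filter, Finset.mem_univ, true_and] at ha
    field_simp
  · intro a ha
    rfl

/-- Completing the square: for `s ≠ 0`. -/
lemma sum_complete (hq : Fintype.card F % 4 = 3) (hd : d % 4 = 3) {s : F} (hs : s ≠ 0)
    (v : (Fin d → F) × F) :
    ∑ ξ : (Fin d → F) × F, ψ F (s * Q' ξ + mm ξ v)
      = -(Fintype.card F : ℂ) ^ ((d + 1) / 2) * ψ F (-(4 * s)⁻¹ * Q' v) := by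
  have hF2 : ringChar F ≠ 2 := ringChar_ne_two hq
  have h2 := two_ne_zero' hF2
  set c : F := -(2 * s)⁻¹ with hc
  set w : (Fin d → F) × F := c • v with hw
  have hre : ∀ ξ : (Fin d → F) × F, s * Q' (ξ + w) + mm (ξ + w) v
      = s * Q' ξ + -(4 * s)⁻¹ * Q' v := by
    intro ξ
    rw [hw, key_alg]
    have e1 : 2 * s * c + 1 = 0 := by
      rw [hc]
      field_simp
      ring
    have e2 : s * c ^ 2 + c = -(4 * s)⁻¹ := by
      have h4 : (4 : F) ≠ 0 := four_ne_zero hF2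
      rw [hc]
      field_simp
      ring
    rw [e1, e2]
    ring
  have hre2 : ∑ ξ : (Fin d → F) × F, ψ F (s * Q' ξ + mm ξ v)
      = ∑ ξ : (Fin d → F) × F, ψ F (s * Q' ξ + -(4 * s)⁻¹ * Q' v) :=
    (Fintype.sum_equiv (Equiv.addRight w)
      (fun ξ => ψ F (s * Q' ξ + -(4 * s)⁻¹ * Q' v))
      (fun ξ => ψ F (s * Q' ξ + mm ξ v))
      (fun ξ => (congrArg (ψ F) (hre ξ)).symm)).symm
  rw [hre2]
  simp only [AddChar.map_add_eq_mul]
  rw [← Finset.sum_mul, sumQ hq hd hs]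

end PSIVec2

namespace PSIVec3
open PSIAux PSIAux2 PSIVec PSIVec2
set_option linter.unusedSectionVars false

variable {F : Type*} [Field F] [Fintype F] [DecidableEq F] {d : ℕ}

lemma split_zero (f : F → ℂ) :
    ∑ s : F, f s = f 0 + ∑ s ∈ univ.filter (fun s : F => s ≠ 0), f s := by
  rw [← Finset.sum_filter_add_sum_filter_not univ (fun s : F => s ≠ 0)]
  have h2 : univ.filter (fun s : F => ¬ s ≠ 0) = {0} := by ext x; simp
  rw [h2, Finset.sum_singleton]
  ring

/-- The key "cone kernel" computation. -/
lemma coneK (hq : Fintype.card F % 4 = 3) (hd : d % 4 = 3) (v : (Fin d → F) × F) :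
    (Fintype.card F : ℂ) * ∑ ξ ∈ univ.filter (fun ξ : (Fin d → F) × F => Q' ξ = 0), ψ F (mm ξ v)
      = (if v = 0 then (Fintype.card F : ℂ) ^ (d + 1) else 0)
        - (Fintype.card F : ℂ) ^ ((d + 1) / 2)
          * ((if Q' v = 0 then (Fintype.card F : ℂ) else 0) - 1) := by
  have step1 : (Fintype.card F : ℂ)
        * ∑ ξ ∈ univ.filter (fun ξ : (Fin d → F) × F => Q' ξ = 0), ψ F (mm ξ v)
      = ∑ ξ : (Fin d → F) × F, (∑ s : F, ψ F (s * Q' ξ)) * ψ F (mm ξ v) := by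
    rw [Finset.mul_sum, Finset.sum_filter]
    refine (Finset.sum_congr rfl fun ξ _ => ?_).symm
    rw [sum_psi_mul]
    by_cases h : Q' ξ = 0
    · rw [if_pos h, if_pos h]
    · rw [if_neg h, if_neg h, zero_mul]
  have step2 : ∑ ξ : (Fin d → F) × F, (∑ s : F, ψ F (s * Q' ξ)) * ψ F (mm ξ v)
      = ∑ s : F, ∑ ξ : (Fin d → F) × F, ψ F (s * Q' ξ + mm ξ v) := by
    rw [Finset.sum_comm]
    refine Finset.sum_congr rfl fun s _ => ?_
    rw [Finset.sum_mul]
    exact Finset.sum_congr rfl fun ξ _ => (AddChar.map_add_eq_mul _ _ _).symm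
  rw [step1, step2, split_zero]
  have h0 : ∑ ξ : (Fin d → F) × F, ψ F ((0 : F) * Q' ξ + mm ξ v)
      = if v = 0 then (Fintype.card F : ℂ) ^ (d + 1) else 0 := by
    rw [← sum_mm v]
    exact Finset.sum_congr rfl fun ξ _ => by rw [zero_mul, zero_add]
  have h1 : ∑ s ∈ univ.filter (fun s : F => s ≠ 0),
        ∑ ξ : (Fin d → F) × F, ψ F (s * Q' ξ + mm ξ v)
      = -(Fintype.card F : ℂ) ^ ((d + 1) / 2)
          * ((if Q' v = 0 then (Fintype.card F : ℂ) else 0) - 1) := by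
    rw [Finset.sum_congr rfl (fun s hs => sum_complete hq hd
      (by simpa using (Finset.mem_filter.mp hs).2) v)]
    rw [← Finset.mul_sum, sum_sigma (ringChar_ne_two hq)]
  rw [h0, h1]
  ring

/-- The restricted L² bound over the cone. -/
lemma cone_l2 (hq : Fintype.card F % 4 = 3) (hd : d % 4 = 3) {γ : Type*} [DecidableEq γ]
    (T : Finset γ) (τ : γ → (Fin d → F) × F)
    (hinj : ∀ y ∈ T, ∀ y' ∈ T, τ y = τ y' → y = y') :
    ∑ ξ ∈ univ.filter (fun ξ : (Fin d → F) × F => Q' ξ = 0),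
        (norm (∑ y ∈ T, ψ F (mm ξ (τ y)))) ^ 2
      ≤ (Fintype.card F : ℝ) ^ d * T.card
        + (Fintype.card F : ℝ) ^ ((d + 1) / 2 - 1) * (T.card : ℝ) ^ 2 := by
  set q : ℕ := Fintype.card F with hqdef
  set M : ℕ := (d + 1) / 2 with hM
  set cone : Finset ((Fin d → F) × F) := univ.filter (fun ξ => Q' ξ = 0) with hcone
  set Φ : ((Fin d → F) × F) → ℂ := fun ξ => ∑ y ∈ T, ψ F (mm ξ (τ y)) with hΦ
  -- the ℂ-identity
  have conjΦ : ∀ ξ, (starRingEnd ℂ) (Φ ξ) = ∑ y ∈ T, ψ F (-(mm ξ (τ y))) := by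
    intro ξ
    rw [hΦ, map_sum]
    exact Finset.sum_congr rfl fun y _ => conj_psi _
  have prodΦ : ∀ ξ, Φ ξ * (starRingEnd ℂ) (Φ ξ)
      = ∑ z ∈ T ×ˢ T, ψ F (mm ξ (τ z.1 - τ z.2)) := by
    intro ξ
    rw [conjΦ, hΦ, Finset.sum_mul_sum, Finset.sum_product]
    refine Finset.sum_congr rfl fun y _ => Finset.sum_congr rfl fun y' _ => ?_
    rw [← AddChar.map_add_eq_mul, ← sub_eq_add_neg, mm_sub_right]
  have key : (q : ℂ) * ∑ ξ ∈ cone, Φ ξ * (starRingEnd ℂ) (Φ ξ)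
      = ∑ z ∈ T ×ˢ T, ((if τ z.1 - τ z.2 = 0 then (q : ℂ) ^ (d + 1) else 0)
          - (q : ℂ) ^ M * ((if Q' (τ z.1 - τ z.2) = 0 then (q : ℂ) else 0) - 1)) := by
    calc (q : ℂ) * ∑ ξ ∈ cone, Φ ξ * (starRingEnd ℂ) (Φ ξ)
        = ∑ z ∈ T ×ˢ T, (q : ℂ) * ∑ ξ ∈ cone, ψ F (mm ξ (τ z.1 - τ z.2)) := by
          rw [Finset.sum_congr rfl (fun ξ _ => prodΦ ξ), Finset.sum_comm, Finset.mul_sum]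
      _ = _ := Finset.sum_congr rfl fun z _ => coneK hq hd _
  set D : ℕ := ((T ×ˢ T).filter (fun z => τ z.1 - τ z.2 = 0)).card with hD
  set R : ℕ := ((T ×ˢ T).filter (fun z => Q' (τ z.1 - τ z.2) = 0)).card with hR
  have key2 : (q : ℂ) * ∑ ξ ∈ cone, Φ ξ * (starRingEnd ℂ) (Φ ξ)
      = (q : ℂ) ^ (d + 1) * D - (q : ℂ) ^ (M + 1) * R + (q : ℂ) ^ M * (T.card : ℂ) ^ 2 := by
    rw [key, Finset.sum_sub_distrib]
    have e1 : ∑ z ∈ T ×ˢ T, (if τ z.1 - τ z.2 = 0 then (q : ℂ) ^ (d + 1) else 0)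
        = (q : ℂ) ^ (d + 1) * D := by
      rw [Finset.sum_ite, Finset.sum_const, Finset.sum_const_zero, add_zero, nsmul_eq_mul]
      ring
    have e2 : ∑ z ∈ T ×ˢ T, (if Q' (τ z.1 - τ z.2) = 0 then (q : ℂ) else 0)
        = (q : ℂ) * R := by
      rw [Finset.sum_ite, Finset.sum_const, Finset.sum_const_zero, add_zero, nsmul_eq_mul]
      ring
    rw [e1, ← Finset.mul_sum, Finset.sum_sub_distrib, e2, Finset.sum_const,
      nsmul_eq_mul, Finset.card_product]
    push_cast
    ring
  have absΦ : ∀ ξ, (norm (Φ ξ)) ^ 2 = (Φ ξ * (starRingEnd ℂ) (Φ ξ)).re := by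
    intro ξ
    rw [Complex.mul_conj, Complex.sq_norm]
    simp
  have key3 : (q : ℝ) * ∑ ξ ∈ cone, (norm (Φ ξ)) ^ 2
      = (q : ℝ) ^ (d + 1) * D - (q : ℝ) ^ (M + 1) * R + (q : ℝ) ^ M * (T.card : ℝ) ^ 2 := by
    have h2 : ((q : ℂ) * ∑ ξ ∈ cone, Φ ξ * (starRingEnd ℂ) (Φ ξ))
        = ((((q : ℝ)) ^ (d + 1) * D - (q : ℝ) ^ (M + 1) * R
            + (q : ℝ) ^ M * (T.card : ℝ) ^ 2 : ℝ) : ℂ) := by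
      rw [key2]
      push_cast
      ring
    have h3 := congrArg Complex.re h2
    rw [Complex.ofReal_re] at h3
    rw [← h3, Complex.mul_re]
    simp only [Complex.natCast_re, Complex.natCast_im, zero_mul, sub_zero, Complex.re_sum]
    congr 1
    exact Finset.sum_congr rfl fun ξ _ => (absΦ ξ)
  -- bounds on the counting quantities
  have hDle : (D : ℝ) ≤ (T.card : ℝ) := by
    have : D ≤ T.card := by
      apply Finset.card_le_card_of_injOn (fun z => z.1)
      · intro z hz
        simp only [Finset.mem_coe, Finset.mem_filter, Finset.mem_product] at hz
        exact hz.1.1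
      · intro z hz w hw hzw
        simp only [Finset.mem_coe, Finset.mem_filter, Finset.mem_product] at hz hw
        have hzw' : z.1 = w.1 := hzw
        have hz2 := sub_eq_zero.mp hz.2
        have hw2 := sub_eq_zero.mp hw.2
        have h22 : z.2 = w.2 := hinj z.2 hz.1.2 w.2 hw.1.2 (by rw [← hz2, hzw', hw2])
        exact Prod.ext hzw' h22
    exact_mod_cast this
  have hqpos : (0 : ℝ) < (q : ℝ) := by
    have : 0 < q := Fintype.card_pos
    exact_mod_cast this
  have hM2 : 2 ≤ M := by
    rw [hM]
    omega
  have hbound : (q : ℝ) * ∑ ξ ∈ cone, (norm (Φ ξ)) ^ 2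
      ≤ (q : ℝ) * ((q : ℝ) ^ d * T.card + (q : ℝ) ^ (M - 1) * (T.card : ℝ) ^ 2) := by
    rw [key3]
    have hRnn : (0 : ℝ) ≤ (q : ℝ) ^ (M + 1) * R := by positivity
    have hd1 : (q : ℝ) ^ (d + 1) = (q : ℝ) * (q : ℝ) ^ d := by ring
    have hm1 : (q : ℝ) ^ M = (q : ℝ) * (q : ℝ) ^ (M - 1) := by
      rw [← pow_succ']
      congr 1
      omega
    have hDq : (q : ℝ) ^ (d + 1) * D ≤ (q : ℝ) ^ (d + 1) * T.card := by
      have hnn : (0:ℝ) ≤ (q : ℝ) ^ (d + 1) := by positivity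
      exact mul_le_mul_of_nonneg_left hDle hnn
    nlinarith [hDq, hRnn]
  exact le_of_mul_le_mul_left hbound hqpos

end PSIVec3

set_option maxHeartbeats 1000000 in
open PSIAux PSIAux2 PSIVec PSIVec2 PSIVec3 in
/-- Point–sphere incidence bound: for `d ≡ 3 mod 4`, `q ≡ 3 mod 4`, a set `P` of points
and a set `S` of spheres of square radii in `F_q^d` (a sphere given by a center and a
radius), with `|P|, |S| ≤ N`, the number of incidences satisfies
`I(P,S) ≤ 4(N²/q + q^{(d-1)/2} N)`. -/
theorem point_sphere_incidence_square_radii {F : Type*} [Field F] [Fintype F] [DecidableEq F]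
    (hq : Fintype.card F % 4 = 3) (d : ℕ) (hd : d % 4 = 3)
    (P : Finset (Fin d → F)) (S : Finset ((Fin d → F) × F))
    (hS : ∀ s ∈ S, ∃ r : F, s.2 = r ^ 2)
    (N : ℕ) (hP : P.card ≤ N) (hSN : S.card ≤ N) :
    (((P ×ˢ S).filter (fun ps : (Fin d → F) × ((Fin d → F) × F) =>
        ∑ i, (ps.1 i - ps.2.1 i) ^ 2 = ps.2.2)).card : ℝ)
      ≤ 4 * ((N : ℝ) ^ 2 / (Fintype.card F : ℝ)
          + (Fintype.card F : ℝ) ^ ((d - 1) / 2) * N) := by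
  classical
  set q : ℕ := Fintype.card F with hqdef
  set M : ℕ := (d + 1) / 2 with hMdef
  have hM2 : 2 ≤ M := by omega
  have hd1 : 3 ≤ d := by omega
  have hK : (d - 1) / 2 = M - 1 := by omega
  have hF2 : ringChar F ≠ 2 := ringChar_ne_two hq
  have h4 : (4 : F) ≠ 0 := four_ne_zero hF2
  have hqpos : (0 : ℝ) < q := by exact_mod_cast Fintype.card_pos
  -- the radius choice function
  set r : ((Fin d → F) × F) → F :=
    fun y => if h : ∃ ρ : F, y.2 = ρ ^ 2 then h.choose else 0 with hrdef
  have hr : ∀ y ∈ S, (r y) ^ 2 = y.2 := by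
    intro y hy
    rw [hrdef]
    simp only [dif_pos (hS y hy)]
    exact ((hS y hy).choose_spec).symm
  -- the lift of an incidence pair
  set L : (Fin d → F) → ((Fin d → F) × F) → ((Fin d → F) × F) :=
    fun p y => (p - y.1, r y) with hLdef
  set Inc : Finset ((Fin d → F) × ((Fin d → F) × F)) :=
    (P ×ˢ S).filter (fun ps => ∑ i, (ps.1 i - ps.2.1 i) ^ 2 = ps.2.2) with hIncdef
  -- the incidence condition in terms of Q'
  have hcond : ∀ z ∈ P ×ˢ S,
      (Q' (L z.1 z.2) = 0 ↔ ∑ i, (z.1 i - z.2.1 i) ^ 2 = z.2.2) := by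
    intro z hz
    have hz2 : z.2 ∈ S := (Finset.mem_product.mp hz).2
    simp only [hLdef, Q', Pi.sub_apply]
    rw [hr z.2 hz2, sub_eq_zero]
  -- Step 1 : q * I = ∑_z ∑_s ψ (s * Q' (L z))
  have step1 : ∑ z ∈ P ×ˢ S, ∑ s : F, ψ F (s * Q' (L z.1 z.2)) = (q : ℂ) * Inc.card := by
    have h1 : ∀ z ∈ P ×ˢ S, ∑ s : F, ψ F (s * Q' (L z.1 z.2))
        = if (∑ i, (z.1 i - z.2.1 i) ^ 2 = z.2.2) then (q : ℂ) else 0 := by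
      intro z hz
      rw [sum_psi_mul]
      by_cases h : Q' (L z.1 z.2) = 0
      · rw [if_pos h, if_pos ((hcond z hz).mp h)]
      · rw [if_neg h, if_neg (fun hc => h ((hcond z hz).mpr hc))]
    rw [Finset.sum_congr rfl h1, Finset.sum_ite, Finset.sum_const, Finset.sum_const_zero,
      add_zero, nsmul_eq_mul, hIncdef]
    ring
  -- Step 2 : split off s = 0
  set U : ℂ := ∑ z ∈ P ×ˢ S, ∑ s ∈ univ.filter (fun s : F => s ≠ 0),
    ψ F (s * Q' (L z.1 z.2)) with hUdef
  have step2 : (q : ℂ) * Inc.card = (P.card : ℂ) * S.card + U := by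
    rw [← step1, hUdef]
    have hperz : ∀ z ∈ P ×ˢ S, ∑ s : F, ψ F (s * Q' (L z.1 z.2))
        = 1 + ∑ s ∈ univ.filter (fun s : F => s ≠ 0), ψ F (s * Q' (L z.1 z.2)) := by
      intro z _
      rw [split_zero (fun s => ψ F (s * Q' (L z.1 z.2)))]
      rw [zero_mul, AddChar.map_zero_eq_one]
    rw [Finset.sum_congr rfl hperz, Finset.sum_add_distrib, Finset.sum_const, nsmul_eq_mul,
      Finset.card_product]
    push_cast
    ring
  -- the exponential sums
  set W : ((Fin d → F) × F) → ℂ :=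
    fun ξ => ∑ z ∈ P ×ˢ S, ψ F (mm ξ (L z.1 z.2)) with hWdef
  set cone : Finset ((Fin d → F) × F) := univ.filter (fun ξ => Q' ξ = 0) with hconedef
  set Z : ℂ := ∑ ξ ∈ cone, W ξ with hZdef
  set E0 : ℕ := ((P ×ˢ S).filter (fun z => L z.1 z.2 = 0)).card with hE0def
  -- Step 3 : q^M * U = q^(d+1) * E0 - q * Z
  have step3 : (q : ℂ) ^ M * U = (q : ℂ) ^ (d + 1) * E0 - (q : ℂ) * Z := by
    have hA : ∀ z ∈ P ×ˢ S, ∀ s ∈ univ.filter (fun s : F => s ≠ 0),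
        (q : ℂ) ^ M * ψ F (s * Q' (L z.1 z.2))
          = -∑ ξ : (Fin d → F) × F, ψ F (-(4 * s)⁻¹ * Q' ξ) * ψ F (mm ξ (L z.1 z.2)) := by
      intro z _ s hs
      have hs0 : s ≠ 0 := by simpa using (Finset.mem_filter.mp hs).2
      have hσ : (-(4 * s)⁻¹ : F) ≠ 0 := by
        intro hcon
        rw [neg_eq_zero, inv_eq_zero] at hcon
        exact (mul_ne_zero h4 hs0) hcon
      have hcs := sum_complete hq hd hσ (L z.1 z.2)
      have hback : (-(4 * (-(4 * s)⁻¹ : F))⁻¹ : F) = s := by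
        field_simp
      rw [hback] at hcs
      have : ∑ ξ : (Fin d → F) × F, ψ F (-(4 * s)⁻¹ * Q' ξ) * ψ F (mm ξ (L z.1 z.2))
          = ∑ ξ : (Fin d → F) × F, ψ F (-(4 * s)⁻¹ * Q' ξ + mm ξ (L z.1 z.2)) :=
        Finset.sum_congr rfl fun ξ _ => (AddChar.map_add_eq_mul _ _ _).symm
      rw [this, hcs, hMdef]
      ring
    calc (q : ℂ) ^ M * U
        = ∑ z ∈ P ×ˢ S, ∑ s ∈ univ.filter (fun s : F => s ≠ 0),
            (q : ℂ) ^ M * ψ F (s * Q' (L z.1 z.2)) := by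
          rw [hUdef, Finset.mul_sum]
          exact Finset.sum_congr rfl fun z _ => Finset.mul_sum _ _ _
      _ = ∑ z ∈ P ×ˢ S, ∑ s ∈ univ.filter (fun s : F => s ≠ 0),
            -∑ ξ : (Fin d → F) × F, ψ F (-(4 * s)⁻¹ * Q' ξ) * ψ F (mm ξ (L z.1 z.2)) :=
          Finset.sum_congr rfl fun z hz => Finset.sum_congr rfl fun s hs => hA z hz s hs
      _ = -∑ z ∈ P ×ˢ S, ∑ s ∈ univ.filter (fun s : F => s ≠ 0),
            ∑ ξ : (Fin d → F) × F, ψ F (-(4 * s)⁻¹ * Q' ξ) * ψ F (mm ξ (L z.1 z.2)) := by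
          simp [Finset.sum_neg_distrib]
      _ = -∑ ξ : (Fin d → F) × F,
            (∑ s ∈ univ.filter (fun s : F => s ≠ 0), ψ F (-(4 * s)⁻¹ * Q' ξ)) * W ξ := by
          congr 1
          calc ∑ z ∈ P ×ˢ S, ∑ s ∈ univ.filter (fun s : F => s ≠ 0),
                ∑ ξ : (Fin d → F) × F, ψ F (-(4 * s)⁻¹ * Q' ξ) * ψ F (mm ξ (L z.1 z.2))
              = ∑ z ∈ P ×ˢ S, ∑ ξ : (Fin d → F) × F,
                  (∑ s ∈ univ.filter (fun s : F => s ≠ 0), ψ F (-(4 * s)⁻¹ * Q' ξ))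
                    * ψ F (mm ξ (L z.1 z.2)) := by
                refine Finset.sum_congr rfl fun z _ => ?_
                rw [Finset.sum_comm]
                exact Finset.sum_congr rfl fun ξ _ => (Finset.sum_mul _ _ _).symm
            _ = ∑ ξ : (Fin d → F) × F,
                  (∑ s ∈ univ.filter (fun s : F => s ≠ 0), ψ F (-(4 * s)⁻¹ * Q' ξ)) * W ξ := by
                rw [Finset.sum_comm]
                exact Finset.sum_congr rfl fun ξ _ => by
                  rw [hWdef, Finset.mul_sum]
      _ = -∑ ξ : (Fin d → F) × F, ((if Q' ξ = 0 then (q : ℂ) else 0) - 1) * W ξ := by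
          congr 1
          exact Finset.sum_congr rfl fun ξ _ => by rw [sum_sigma hF2]
      _ = (q : ℂ) ^ (d + 1) * E0 - (q : ℂ) * Z := by
          have e1 : ∑ ξ : (Fin d → F) × F, ((if Q' ξ = 0 then (q : ℂ) else 0) - 1) * W ξ
              = (∑ ξ : (Fin d → F) × F, (if Q' ξ = 0 then (q : ℂ) * W ξ else 0))
                - ∑ ξ : (Fin d → F) × F, W ξ := by
            rw [← Finset.sum_sub_distrib]
            refine Finset.sum_congr rfl fun ξ _ => ?_
            by_cases h : Q' ξ = 0
            · rw [if_pos h, if_pos h]; ring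
            · rw [if_neg h, if_neg h]; ring
          have e2 : ∑ ξ : (Fin d → F) × F, (if Q' ξ = 0 then (q : ℂ) * W ξ else 0)
              = (q : ℂ) * Z := by
            rw [hZdef, ← Finset.sum_filter, hconedef, Finset.mul_sum]
          have e3 : ∑ ξ : (Fin d → F) × F, W ξ = (q : ℂ) ^ (d + 1) * E0 := by
            rw [hWdef, Finset.sum_comm]
            have : ∀ z ∈ P ×ˢ S, ∑ ξ : (Fin d → F) × F, ψ F (mm ξ (L z.1 z.2))
                = if L z.1 z.2 = 0 then (q : ℂ) ^ (d + 1) else 0 :=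
              fun z _ => sum_mm _
            rw [Finset.sum_congr rfl this, Finset.sum_ite, Finset.sum_const,
              Finset.sum_const_zero, add_zero, nsmul_eq_mul, hE0def]
            ring
          rw [e1, e2, e3]
          ring
  -- factor W ξ
  set τP : (Fin d → F) → ((Fin d → F) × F) := fun p => (p, 0) with hτP
  set τS : ((Fin d → F) × F) → ((Fin d → F) × F) := fun y => (y.1, -(r y)) with hτS
  have hdiff : ∀ p y, τP p - τS y = L p y := by
    intro p y
    rw [hτP, hτS, hLdef]
    simp [Prod.ext_iff, sub_neg_eq_add]
  have hWfac : ∀ ξ, W ξ = (∑ p ∈ P, ψ F (mm ξ (τP p)))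
      * (starRingEnd ℂ) (∑ y ∈ S, ψ F (mm ξ (τS y))) := by
    intro ξ
    calc W ξ = ∑ p ∈ P, ∑ y ∈ S, ψ F (mm ξ (L p y)) := by
          show (∑ z ∈ P ×ˢ S, ψ F (mm ξ (L z.1 z.2))) = _
          rw [Finset.sum_product]
      _ = ∑ p ∈ P, ∑ y ∈ S, ψ F (mm ξ (τP p)) * ψ F (-(mm ξ (τS y))) := by
          refine Finset.sum_congr rfl fun p _ => Finset.sum_congr rfl fun y _ => ?_
          rw [← AddChar.map_add_eq_mul, ← sub_eq_add_neg, mm_sub_right, hdiff]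
      _ = (∑ p ∈ P, ψ F (mm ξ (τP p))) * ∑ y ∈ S, ψ F (-(mm ξ (τS y))) := by
          rw [Finset.sum_mul_sum]
      _ = _ := by
          rw [map_sum]
          congr 1
          exact Finset.sum_congr rfl fun y _ => (conj_psi _).symm
  -- bound |Z|
  set X : ℝ := (q : ℝ) ^ d * N + (q : ℝ) ^ (M - 1) * (N : ℝ) ^ 2 with hXdef
  have hXnn : 0 ≤ X := by rw [hXdef]; positivity
  have hZabs : norm Z ≤ X := by
    set A : ((Fin d → F) × F) → ℝ := fun ξ => norm (∑ p ∈ P, ψ F (mm ξ (τP p)))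
      with hA
    set B : ((Fin d → F) × F) → ℝ := fun ξ => norm (∑ y ∈ S, ψ F (mm ξ (τS y)))
      with hB
    have h1 : norm Z ≤ ∑ ξ ∈ cone, A ξ * B ξ := by
      refine le_trans (norm_sum_le _ _) (Finset.sum_le_sum fun ξ _ => ?_)
      rw [hWfac ξ, norm_mul, Complex.norm_conj]
    have hPA : ∑ ξ ∈ cone, (A ξ) ^ 2
        ≤ (q : ℝ) ^ d * P.card + (q : ℝ) ^ (M - 1) * (P.card : ℝ) ^ 2 := by
      rw [hconedef]
      refine cone_l2 hq hd P τP ?_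
      intro y hy y' hy' hyy'
      have h' : (τP y).1 = (τP y').1 := congrArg Prod.fst hyy'
      simpa [hτP] using h'
    have hPB : ∑ ξ ∈ cone, (B ξ) ^ 2
        ≤ (q : ℝ) ^ d * S.card + (q : ℝ) ^ (M - 1) * (S.card : ℝ) ^ 2 := by
      rw [hconedef]
      refine cone_l2 hq hd S τS ?_
      intro y hy y' hy' hyy'
      have h1'' : (τS y).1 = (τS y').1 := congrArg Prod.fst hyy'
      have h1' : y.1 = y'.1 := by simpa [hτS] using h1''
      have h2'' : (τS y).2 = (τS y').2 := congrArg Prod.snd hyy'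
      have h2' : r y = r y' := by simpa [hτS] using h2''
      have h3' : y.2 = y'.2 := by rw [← hr y hy, ← hr y' hy', h2']
      exact Prod.ext h1' h3'
    have hcard : (P.card : ℝ) ≤ N := by exact_mod_cast hP
    have hcard' : (S.card : ℝ) ≤ N := by exact_mod_cast hSN
    have hPXA : ∑ ξ ∈ cone, (A ξ) ^ 2 ≤ X := by
      refine le_trans hPA ?_
      rw [hXdef]
      have hNn : (0:ℝ) ≤ (P.card : ℝ) := by positivity
      gcongr
    have hPXB : ∑ ξ ∈ cone, (B ξ) ^ 2 ≤ X := by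
      refine le_trans hPB ?_
      rw [hXdef]
      gcongr
    have hCS : (∑ ξ ∈ cone, A ξ * B ξ) ^ 2
        ≤ (∑ ξ ∈ cone, (A ξ) ^ 2) * (∑ ξ ∈ cone, (B ξ) ^ 2) :=
      Finset.sum_mul_sq_le_sq_mul_sq cone A B
    have hABnn : 0 ≤ ∑ ξ ∈ cone, A ξ * B ξ := by
      refine Finset.sum_nonneg fun ξ _ => ?_
      have : 0 ≤ A ξ := by rw [hA]; positivity
      have : 0 ≤ B ξ := by rw [hB]; positivity
      positivity
    have hfin : (∑ ξ ∈ cone, A ξ * B ξ) ^ 2 ≤ X ^ 2 := by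
      have hAn : 0 ≤ ∑ ξ ∈ cone, (A ξ) ^ 2 := Finset.sum_nonneg fun ξ _ => sq_nonneg _
      have hBn : 0 ≤ ∑ ξ ∈ cone, (B ξ) ^ 2 := Finset.sum_nonneg fun ξ _ => sq_nonneg _
      calc (∑ ξ ∈ cone, A ξ * B ξ) ^ 2
          ≤ (∑ ξ ∈ cone, (A ξ) ^ 2) * (∑ ξ ∈ cone, (B ξ) ^ 2) := hCS
        _ ≤ X * X := mul_le_mul hPXA hPXB hBn hXnn
        _ = X ^ 2 := (sq X).symm
    have := (pow_le_pow_iff_left₀ hABnn hXnn (two_ne_zero)).mp hfin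
    exact le_trans h1 this
  -- E0 ≤ N
  have hE0 : (E0 : ℝ) ≤ (N : ℝ) := by
    have h1 : E0 ≤ S.card := by
      rw [hE0def]
      apply Finset.card_le_card_of_injOn (fun z => z.2)
      · intro z hz
        exact (Finset.mem_product.mp (Finset.mem_filter.mp hz).1).2
      · intro z hz w hw hzw
        simp only [Finset.mem_coe, Finset.mem_filter] at hz hw
        have h22 : z.2 = w.2 := hzw
        have e1 : (L z.1 z.2).1 = (0 : (Fin d → F) × F).1 := congrArg Prod.fst hz.2
        have e2 : (L w.1 w.2).1 = (0 : (Fin d → F) × F).1 := congrArg Prod.fst hw.2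
        simp only [hLdef, Prod.fst_zero] at e1 e2
        have e1' : z.1 = z.2.1 := sub_eq_zero.mp e1
        have e2' : w.1 = w.2.1 := sub_eq_zero.mp e2
        exact Prod.ext (by rw [e1', h22, ← e2']) h22
    calc (E0 : ℝ) ≤ (S.card : ℝ) := by exact_mod_cast h1
      _ ≤ N := by exact_mod_cast hSN
  -- real part extraction
  have hC : ((q : ℂ)) ^ (M + 1) * Inc.card - (q : ℂ) ^ M * ((P.card : ℂ) * S.card)
      - (q : ℂ) ^ (d + 1) * E0 = -(q : ℂ) * Z := by
    linear_combination (q : ℂ) ^ M * step2 + step3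
  have hC' : ((((q : ℝ)) ^ (M + 1) * Inc.card - (q : ℝ) ^ M * ((P.card : ℝ) * S.card)
      - (q : ℝ) ^ (d + 1) * E0 : ℝ) : ℂ) = -(q : ℂ) * Z := by
    push_cast
    push_cast at hC
    linear_combination hC
  have hrealeq : (q : ℝ) ^ (M + 1) * Inc.card - (q : ℝ) ^ M * ((P.card : ℝ) * S.card)
      - (q : ℝ) ^ (d + 1) * E0 = -(q : ℝ) * Z.re := by
    have := congrArg Complex.re hC'
    rw [Complex.ofReal_re] at this
    rw [this]
    simp [Complex.mul_re]
  have hrebound : -(q : ℝ) * Z.re ≤ (q : ℝ) * X := by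
    have h1 : -Z.re ≤ norm Z := by
      calc -Z.re ≤ |Z.re| := neg_le_abs _
        _ ≤ norm Z := Complex.abs_re_le_norm Z
    calc -(q : ℝ) * Z.re = (q : ℝ) * (-Z.re) := by ring
      _ ≤ (q : ℝ) * norm Z := by
          exact mul_le_mul_of_nonneg_left h1 (le_of_lt hqpos)
      _ ≤ (q : ℝ) * X := mul_le_mul_of_nonneg_left hZabs (le_of_lt hqpos)
  have hPS : (P.card : ℝ) * S.card ≤ (N : ℝ) ^ 2 := by
    have h1 : (P.card : ℝ) ≤ N := by exact_mod_cast hP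
    have h2 : (S.card : ℝ) ≤ N := by exact_mod_cast hSN
    have h3 : (0:ℝ) ≤ (S.card : ℝ) := Nat.cast_nonneg _
    calc (P.card : ℝ) * S.card ≤ (N : ℝ) * N := mul_le_mul h1 h2 h3 (Nat.cast_nonneg N)
      _ = (N : ℝ) ^ 2 := (sq (N : ℝ)).symm
  -- main bound
  have main : (q : ℝ) ^ (M + 1) * Inc.card
      ≤ (q : ℝ) ^ M * (N : ℝ) ^ 2 + (q : ℝ) ^ (d + 1) * N + (q : ℝ) * X := by
    have t1 : (0:ℝ) ≤ (q : ℝ) ^ M := by positivity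
    have t2 : (0:ℝ) ≤ (q : ℝ) ^ (d + 1) := by positivity
    nlinarith [hrealeq, hrebound, mul_le_mul_of_nonneg_left hPS t1,
      mul_le_mul_of_nonneg_left hE0 t2]
  -- convert to the final form
  have hpowpos : (0:ℝ) < (q : ℝ) ^ (M + 1) := by positivity
  have hexpand : (q : ℝ) ^ (M + 1) * (2 * (N : ℝ) ^ 2 / q + 2 * (q : ℝ) ^ (M - 1) * N)
      = 2 * (q : ℝ) ^ M * (N : ℝ) ^ 2 + 2 * (q : ℝ) ^ (d + 1) * N := by
    have e2 : (q : ℝ) ^ (M + 1) * (q : ℝ) ^ (M - 1) = (q : ℝ) ^ (d + 1) := by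
      rw [← pow_add]
      congr 1
      omega
    have hqne : (q : ℝ) ≠ 0 := ne_of_gt hqpos
    have expand1 : (q : ℝ) ^ (M + 1) * (2 * (N : ℝ) ^ 2 / q) = 2 * (q : ℝ) ^ M * (N : ℝ) ^ 2 := by
      rw [pow_succ]
      field_simp
    have expand2 : (q : ℝ) ^ (M + 1) * (2 * (q : ℝ) ^ (M - 1) * N)
        = 2 * (q : ℝ) ^ (d + 1) * N := by
      calc (q : ℝ) ^ (M + 1) * (2 * (q : ℝ) ^ (M - 1) * N)
          = 2 * ((q : ℝ) ^ (M + 1) * (q : ℝ) ^ (M - 1)) * N := by ring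
        _ = 2 * (q : ℝ) ^ (d + 1) * N := by rw [e2]
    rw [mul_add, expand1, expand2]
  have hX2 : (q : ℝ) * X = (q : ℝ) ^ (d + 1) * N + (q : ℝ) ^ M * (N : ℝ) ^ 2 := by
    rw [hXdef]
    have e1 : (q : ℝ) * (q : ℝ) ^ d = (q : ℝ) ^ (d + 1) := by rw [← pow_succ']
    have e2 : (q : ℝ) * (q : ℝ) ^ (M - 1) = (q : ℝ) ^ M := by
      rw [← pow_succ']
      congr 1
      omega
    rw [mul_add, ← mul_assoc, ← mul_assoc, e1, e2]
  have hmul : (q : ℝ) ^ (M + 1) * Inc.card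
      ≤ (q : ℝ) ^ (M + 1) * (2 * (N : ℝ) ^ 2 / q + 2 * (q : ℝ) ^ (M - 1) * N) := by
    rw [hexpand]
    rw [hX2] at main
    linarith
  have hfinal : (Inc.card : ℝ) ≤ 2 * (N : ℝ) ^ 2 / q + 2 * (q : ℝ) ^ (M - 1) * N :=
    le_of_mul_le_mul_left hmul hpowpos
  rw [hK]
  have t1 : (0:ℝ) ≤ (N : ℝ) ^ 2 / q := by positivity
  have t2 : (0:ℝ) ≤ (q : ℝ) ^ (M - 1) * N := by positivity
  calc (Inc.card : ℝ) ≤ 2 * (N : ℝ) ^ 2 / q + 2 * (q : ℝ) ^ (M - 1) * N := hfinal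
    _ ≤ 4 * ((N : ℝ) ^ 2 / q + (q : ℝ) ^ (M - 1) * N) := by
        have : 2 * (N : ℝ) ^ 2 / q = 2 * ((N : ℝ) ^ 2 / q) := by ring
        linarith
end

section
/- Let P be a set of points in F_q^d and S a set of spheres (with arbitrary radii) in F_q^d, and let I(P,S) be the number of point-sphere incidences. Then |I(P,S) - |P||S|/q| ≤ q^{d/2}·(|P||S|)^{1/2}. -/
open Finset

private lemma fiber_count {F : Type*} [Field F] [Fintype F] [DecidableEq F]
    {d : ℕ} {a : Fin d → F} (ha : a ≠ 0) (b : F) :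
    (Fintype.card F) * (univ.filter (fun c : Fin d → F => ∑ i, a i * c i = b)).card
      = (Fintype.card F) ^ d := by
  obtain ⟨i, hi⟩ : ∃ i, a i ≠ 0 := by
    by_contra h; push_neg at h; exact ha (funext fun i => h i)
  have key : ∀ b' : F, (univ.filter (fun c : Fin d → F => ∑ i, a i * c i = b')).card
      = (univ.filter (fun c : Fin d → F => ∑ i, a i * c i = b)).card := by
    intro b'
    set t : Fin d → F := fun j => if j = i then (b - b') / a i else 0 with ht
    have htsum : ∑ j, a j * t j = b - b' := by
      rw [Finset.sum_eq_single i]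
      · simp only [ht, ↓reduceIte]; field_simp
      · intro j _ hj; simp [ht, hj]
      · simp
    have hsum : ∀ c : Fin d → F, ∑ j, a j * (c j + t j) = (∑ j, a j * c j) + (b - b') := by
      intro c
      simp only [mul_add, Finset.sum_add_distrib, htsum]
    apply Finset.card_bij' (fun c _ => c + t) (fun c _ => c - t)
    · intro c hc
      simp only [mem_filter, mem_univ, true_and] at hc ⊢
      have := hsum c
      simp only [Pi.add_apply] at this ⊢
      rw [this, hc]; ring
    · intro c hc
      simp only [mem_filter, mem_univ, true_and] at hc ⊢
      simp only [Pi.sub_apply]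
      have : ∑ j, a j * (c j - t j) = (∑ j, a j * c j) - (b - b') := by
        simp [mul_sub, Finset.sum_sub_distrib, htsum]
      rw [this, hc]; ring
    · intro c _; funext j; simp
    · intro c _; funext j; simp
  have hcard := Finset.card_eq_sum_card_fiberwise
    (f := fun c : Fin d → F => ∑ i, a i * c i) (s := univ) (t := univ)
    (fun x _ => mem_univ _)
  have : ∑ b' : F, (univ.filter (fun c : Fin d → F => ∑ i, a i * c i = b')).card
      = Fintype.card F * (univ.filter (fun c : Fin d → F => ∑ i, a i * c i = b)).card := by
    rw [Finset.sum_congr rfl (fun b' _ => key b'), Finset.sum_const, card_univ, smul_eq_mul]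
  rw [← this, ← hcard, card_univ]
  simp [Fintype.card_fun]

private lemma cross_sum {F : Type*} [Field F] [Fintype F] [DecidableEq F]
    (hq : Odd (Fintype.card F)) {d : ℕ} (p p' : Fin d → F) :
    ∑ s : (Fin d → F) × F,
      ((if ∑ i, (p i - s.1 i) ^ 2 = s.2 then (1:ℝ) else 0) - 1 / (Fintype.card F : ℝ))
      * ((if ∑ i, (p' i - s.1 i) ^ 2 = s.2 then (1:ℝ) else 0) - 1 / (Fintype.card F : ℝ))
      ≤ if p = p' then (Fintype.card F : ℝ) ^ d else 0 := by
  have hq0 : (0:ℝ) < (Fintype.card F : ℝ) := by exact_mod_cast Fintype.card_pos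
  set q : ℝ := (Fintype.card F : ℝ) with hqdef
  -- inner sum over radii
  have hr : ∀ A B : F, ∑ r : F, ((if A = r then (1:ℝ) else 0) - 1 / q)
      * ((if B = r then (1:ℝ) else 0) - 1 / q) = (if A = B then (1:ℝ) else 0) - 1 / q := by
    intro A B
    have h1 : ∑ r : F, (if A = r then (1:ℝ) else 0) = 1 := by
      rw [Finset.sum_ite_eq]; simp
    have h2 : ∑ r : F, (if B = r then (1:ℝ) else 0) = 1 := by
      rw [Finset.sum_ite_eq]; simp
    have h3 : ∑ r : F, (if A = r then (1:ℝ) else 0) * (if B = r then (1:ℝ) else 0)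
        = if A = B then (1:ℝ) else 0 := by
      simp only [ite_mul, one_mul, zero_mul]
      rw [Finset.sum_ite_eq]
      simp [eq_comm]
    have expand : ∀ r : F, ((if A = r then (1:ℝ) else 0) - 1 / q)
        * ((if B = r then (1:ℝ) else 0) - 1 / q)
        = (if A = r then (1:ℝ) else 0) * (if B = r then (1:ℝ) else 0)
          - (1 / q) * (if A = r then (1:ℝ) else 0)
          - (1 / q) * (if B = r then (1:ℝ) else 0) + 1 / q ^ 2 := by
      intro r; ring
    rw [Finset.sum_congr rfl (fun r _ => expand r)]
    simp only [Finset.sum_add_distrib, Finset.sum_sub_distrib, ← Finset.mul_sum, h1, h2, h3,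
      Finset.sum_const, card_univ, nsmul_eq_mul, ← hqdef]
    field_simp
    ring
  rw [Fintype.sum_prod_type]
  have step : ∀ c : Fin d → F, ∑ r : F,
      ((if ∑ i, (p i - c i) ^ 2 = r then (1:ℝ) else 0) - 1 / q)
      * ((if ∑ i, (p' i - c i) ^ 2 = r then (1:ℝ) else 0) - 1 / q)
      = (if (∑ i, (p i - c i) ^ 2) = (∑ i, (p' i - c i) ^ 2) then (1:ℝ) else 0) - 1 / q :=
    fun c => hr _ _
  rw [Finset.sum_congr rfl (fun c _ => step c)]
  rw [Finset.sum_sub_distrib, Finset.sum_boole, Finset.sum_const, card_univ, nsmul_eq_mul]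
  have hcardfun : (Fintype.card (Fin d → F) : ℝ) = q ^ d := by
    rw [Fintype.card_fun]; push_cast; simp [hqdef]
  rcases eq_or_ne p p' with h | h
  · subst h
    rw [if_pos rfl]
    have : (univ.filter (fun c : Fin d → F => ∑ i, (p i - c i) ^ 2 = ∑ i, (p i - c i) ^ 2))
        = univ := by
      apply Finset.filter_true_of_mem; intro c _; rfl
    rw [this, card_univ, hcardfun]
    have : 0 ≤ q ^ d * (1 / q) := by positivity
    linarith
  · rw [if_neg h]
    -- rewrite the sphere-equality condition as a linear condition
    obtain ⟨i0, hi0⟩ : ∃ i, p i ≠ p' i := by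
      by_contra hc; push_neg at hc; exact h (funext hc)
    have h2 : (2 : F) ≠ 0 := by
      apply Ring.two_ne_zero
      rw [Ne, FiniteField.even_card_iff_char_two]
      rw [Nat.odd_iff] at hq
      omega
    set a : Fin d → F := fun i => 2 * (p i - p' i) with hadef
    set b : F := ∑ i, (p i ^ 2 - p' i ^ 2) with hbdef
    have ha : a ≠ 0 := by
      intro hz
      have := congrFun hz i0
      simp only [hadef, Pi.zero_apply] at this
      exact hi0 (sub_eq_zero.mp ((mul_eq_zero.mp this).resolve_left h2))
    have hiff : ∀ c : Fin d → F,
        ((∑ i, (p i - c i) ^ 2) = (∑ i, (p' i - c i) ^ 2)) ↔ (∑ i, a i * c i = b) := by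
      intro c
      rw [← sub_eq_zero, ← sub_eq_zero (a := ∑ i, a i * c i)]
      have hdiff : (∑ i, (p i - c i) ^ 2) - (∑ i, (p' i - c i) ^ 2)
          = b - ∑ i, a i * c i := by
        rw [hbdef, ← Finset.sum_sub_distrib, ← Finset.sum_sub_distrib]
        exact Finset.sum_congr rfl fun i _ => by rw [hadef]; ring
      rw [hdiff]
      constructor
      · intro hz; linear_combination -hz
      · intro hz; linear_combination -hz
    have hfilter : (univ.filter (fun c : Fin d → F =>
          (∑ i, (p i - c i) ^ 2) = (∑ i, (p' i - c i) ^ 2)))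
        = univ.filter (fun c : Fin d → F => ∑ i, a i * c i = b) :=
      Finset.filter_congr fun c _ => hiff c
    rw [hfilter]
    have hN := fiber_count ha b
    have hNr : q * ((univ.filter (fun c : Fin d → F => ∑ i, a i * c i = b)).card : ℝ)
        = q ^ d := by rw [hqdef]; exact_mod_cast hN
    have : ((univ.filter (fun c : Fin d → F => ∑ i, a i * c i = b)).card : ℝ)
        = q ^ d * (1 / q) := by
      field_simp
      linarith [hNr]
    rw [this, hcardfun]
    simp

/-- The point–sphere incidence bound of Cilleruelo–Iosevich–Lund–Roche-Newton–Rudnev and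
Phuong–Pham–Vinh: `|I(P,S) - |P||S|/q| ≤ q^{d/2} (|P||S|)^{1/2}`. -/
theorem point_sphere_incidence_general {F : Type*} [Field F] [Fintype F] [DecidableEq F]
    (hq : Odd (Fintype.card F)) (d : ℕ)
    (P : Finset (Fin d → F)) (S : Finset ((Fin d → F) × F)) :
    |(((P ×ˢ S).filter (fun ps : (Fin d → F) × ((Fin d → F) × F) =>
          ∑ i, (ps.1 i - ps.2.1 i) ^ 2 = ps.2.2)).card : ℝ)
        - (P.card : ℝ) * S.card / (Fintype.card F : ℝ)|
      ≤ Real.sqrt ((Fintype.card F : ℝ) ^ d * P.card * S.card) := by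
  classical
  have hq0 : (0:ℝ) < (Fintype.card F : ℝ) := by exact_mod_cast Fintype.card_pos
  set q : ℝ := (Fintype.card F : ℝ) with hqdef
  set g : (Fin d → F) → ((Fin d → F) × F) → ℝ :=
    fun p s => (if ∑ i, (p i - s.1 i) ^ 2 = s.2 then (1:ℝ) else 0) - 1 / q with hg
  set f : ((Fin d → F) × F) → ℝ := fun s => ∑ p ∈ P, g p s with hf
  -- Step A : the quantity inside the absolute value equals `∑ s ∈ S, f s`
  have hI : ((((P ×ˢ S).filter (fun ps : (Fin d → F) × ((Fin d → F) × F) =>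
          ∑ i, (ps.1 i - ps.2.1 i) ^ 2 = ps.2.2)).card : ℝ))
      = ∑ p ∈ P, ∑ s ∈ S, (if ∑ i, (p i - s.1 i) ^ 2 = s.2 then (1:ℝ) else 0) := by
    rw [Finset.card_filter]
    push_cast
    rw [Finset.sum_product]
  have hA : ((((P ×ˢ S).filter (fun ps : (Fin d → F) × ((Fin d → F) × F) =>
          ∑ i, (ps.1 i - ps.2.1 i) ^ 2 = ps.2.2)).card : ℝ))
        - (P.card : ℝ) * S.card / q = ∑ s ∈ S, f s := by
    simp only [hf, hg, Finset.sum_sub_distrib, Finset.sum_const, nsmul_eq_mul]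
    rw [Finset.sum_comm, ← hI]
    ring
  -- Step C : second moment bound
  have hC : ∑ s : (Fin d → F) × F, f s ^ 2 ≤ (P.card : ℝ) * q ^ d := by
    have hsq : ∀ s : (Fin d → F) × F, f s ^ 2 = ∑ p ∈ P, ∑ p' ∈ P, g p s * g p' s := by
      intro s; rw [sq, hf, Finset.sum_mul_sum]
    calc ∑ s : (Fin d → F) × F, f s ^ 2
        = ∑ p ∈ P, ∑ p' ∈ P, ∑ s : (Fin d → F) × F, g p s * g p' s := by
          rw [Finset.sum_congr rfl fun s _ => hsq s, Finset.sum_comm]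
          exact Finset.sum_congr rfl fun p _ => Finset.sum_comm
      _ ≤ ∑ p ∈ P, ∑ p' ∈ P, (if p = p' then q ^ d else 0) := by
          apply Finset.sum_le_sum; intro p _
          apply Finset.sum_le_sum; intro p' _
          exact cross_sum hq p p'
      _ = ∑ p ∈ P, (if p ∈ P then q ^ d else 0) := by
          exact Finset.sum_congr rfl fun p _ => by rw [Finset.sum_ite_eq P p (fun _ => q ^ d)]
      _ = (P.card : ℝ) * q ^ d := by
          rw [Finset.sum_congr rfl fun p hp => if_pos hp, Finset.sum_const, nsmul_eq_mul]
  -- Cauchy–Schwarz and conclusion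
  rw [hA]
  have hcs := Finset.sum_mul_sq_le_sq_mul_sq S (fun _ => (1:ℝ)) f
  simp only [one_mul, one_pow, Finset.sum_const, nsmul_eq_mul, mul_one] at hcs
  have hsub : ∑ s ∈ S, f s ^ 2 ≤ ∑ s : (Fin d → F) × F, f s ^ 2 :=
    Finset.sum_le_sum_of_subset_of_nonneg (Finset.subset_univ S)
      (fun s _ _ => sq_nonneg _)
  have h1 : (∑ s ∈ S, f s) ^ 2 ≤ q ^ d * (P.card : ℝ) * S.card := by
    calc (∑ s ∈ S, f s) ^ 2 ≤ (S.card : ℝ) * ∑ s ∈ S, f s ^ 2 := hcs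
      _ ≤ (S.card : ℝ) * ((P.card : ℝ) * q ^ d) := by
          apply mul_le_mul_of_nonneg_left (le_trans hsub hC) (by positivity)
      _ = q ^ d * (P.card : ℝ) * S.card := by ring
  rw [← Real.sqrt_sq_eq_abs]
  exact Real.sqrt_le_sqrt h1
end

section
/- Let A ⊆ F_q and d ≥ 2. The additive energy E⁺((d-1)A², (d-1)A²), i.e. the number of 2(d-1)-tuples (x_1,...,x_{d-1},y_1,...,y_{d-1}) ∈ A^{2(d-1)} with x_1² + ... + x_{d-1}² = y_1² + ... + y_{d-1}², is at most C·|A|^{2d-3} for an absolute constant C (depending only on d). -/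
open Finset

/-- The additive energy `E⁺((d-1)A², (d-1)A²)`, i.e. the number of `2(d-1)`-tuples from `A`
with `x₁² + ⋯ + x_{d-1}² = y₁² + ⋯ + y_{d-1}²`, is at most `C·|A|^{2d-3}` for a constant
`C` depending only on `d`. -/
theorem additive_energy_sum_of_squares_bound (d : ℕ) (hd : 2 ≤ d) :
    ∃ C : ℝ, 0 < C ∧
      ∀ (F : Type) [Field F] [Fintype F] [DecidableEq F],
        Odd (Fintype.card F) →
        ∀ A : Finset F,
          ((Finset.univ.filter (fun p : (Fin (d - 1) → F) × (Fin (d - 1) → F) =>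
              (∀ i, p.1 i ∈ A) ∧ (∀ i, p.2 i ∈ A) ∧
                ∑ i, (p.1 i) ^ 2 = ∑ i, (p.2 i) ^ 2)).card : ℝ)
            ≤ C * (A.card : ℝ) ^ (2 * d - 3) := by
  refine ⟨2, by norm_num, ?_⟩
  intro F _ _ _ _ A
  have hpos : 0 < d - 1 := by omega
  set j : Fin (d - 1) := ⟨0, hpos⟩ with hj
  set S := Finset.univ.filter (fun p : (Fin (d - 1) → F) × (Fin (d - 1) → F) =>
              (∀ i, p.1 i ∈ A) ∧ (∀ i, p.2 i ∈ A) ∧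
                ∑ i, (p.1 i) ^ 2 = ∑ i, (p.2 i) ^ 2) with hS
  set f : (Fin (d - 1) → F) × (Fin (d - 1) → F) → (Fin (d - 1) → F) × (Fin (d - 1) → F) :=
    fun p => (p.1, Function.update p.2 j 0) with hf
  -- each fiber of f on S has at most 2 elements
  have hfiber : ∀ a ∈ S.image f, (S.filter fun x => f x = a).card ≤ 2 := by
    intro a ha
    obtain ⟨b, hbS, hba⟩ := Finset.mem_image.mp ha
    have hmem : ∀ p ∈ S.filter fun x => f x = a, p.2 j ∈ ({b.2 j, -(b.2 j)} : Finset F) := by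
      intro p hp
      obtain ⟨hpS, hpa⟩ := Finset.mem_filter.mp hp
      have hpS' := (Finset.mem_filter.mp hpS).2
      have hbS' := (Finset.mem_filter.mp hbS).2
      have h1 : p.1 = b.1 := by
        have := congrArg Prod.fst (hpa.trans hba.symm); simpa [hf] using this
      have h2 : ∀ i, i ≠ j → p.2 i = b.2 i := by
        intro i hi
        have := congrArg (fun g => g.2 i) (hpa.trans hba.symm)
        simpa [hf, Function.update_of_ne hi] using this
      have hsq : (p.2 j) ^ 2 = (b.2 j) ^ 2 := by
        have ep : (p.2 j) ^ 2 + ∑ i ∈ univ.erase j, (p.2 i) ^ 2 = ∑ i, (p.1 i) ^ 2 :=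
          (Finset.add_sum_erase univ (fun i => (p.2 i) ^ 2) (mem_univ j)).trans hpS'.2.2.symm
        have eb : (b.2 j) ^ 2 + ∑ i ∈ univ.erase j, (b.2 i) ^ 2 = ∑ i, (b.1 i) ^ 2 :=
          (Finset.add_sum_erase univ (fun i => (b.2 i) ^ 2) (mem_univ j)).trans hbS'.2.2.symm
        have hsum : ∑ i ∈ univ.erase j, (p.2 i) ^ 2 = ∑ i ∈ univ.erase j, (b.2 i) ^ 2 :=
          Finset.sum_congr rfl fun i hi => by rw [h2 i (Finset.ne_of_mem_erase hi)]
        have h1' : ∑ i, (p.1 i) ^ 2 = ∑ i, (b.1 i) ^ 2 := by rw [h1]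
        have := ep.trans (h1'.trans eb.symm)
        rw [hsum] at this
        exact add_right_cancel this
      have := sq_eq_sq_iff_eq_or_eq_neg.mp hsq
      simpa using this
    have hinj : Set.InjOn (fun p : (Fin (d - 1) → F) × (Fin (d - 1) → F) => p.2 j)
        (S.filter fun x => f x = a) := by
      intro p hp q hq hpq
      obtain ⟨_, hpa⟩ := Finset.mem_filter.mp hp
      obtain ⟨_, hqa⟩ := Finset.mem_filter.mp hq
      have h1 : p.1 = q.1 := by
        have := congrArg Prod.fst (hpa.trans hqa.symm); simpa [hf] using this
      have h2 : p.2 = q.2 := by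
        funext i
        by_cases hi : i = j
        · subst hi; exact hpq
        · have := congrArg (fun g => g.2 i) (hpa.trans hqa.symm)
          simpa [hf, Function.update_of_ne hi] using this
      exact Prod.ext h1 h2
    calc (S.filter fun x => f x = a).card ≤ ({b.2 j, -(b.2 j)} : Finset F).card :=
          Finset.card_le_card_of_injOn _ hmem hinj
      _ ≤ 2 := Finset.card_insert_le _ _ |>.trans (by simp)
  have hcard : S.card ≤ 2 * (S.image f).card := Finset.card_le_mul_card_image S 2 hfiber
  -- bound the image
  have himg : S.image f ⊆ (Fintype.piFinset fun _ : Fin (d-1) => A) ×ˢ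
      (Fintype.piFinset fun i : Fin (d-1) => if i = j then ({0} : Finset F) else A) := by
    intro a ha
    obtain ⟨p, hpS, hpa⟩ := Finset.mem_image.mp ha
    have hpS' := (Finset.mem_filter.mp hpS).2
    rw [← hpa]
    refine Finset.mem_product.mpr ⟨?_, ?_⟩
    · exact Fintype.mem_piFinset.mpr hpS'.1
    · refine Fintype.mem_piFinset.mpr fun i => ?_
      by_cases hi : i = j
      · subst hi; simp [hf]
      · simp [hf, Function.update_of_ne hi, hi, hpS'.2.1 i]
  have himgcard : (S.image f).card ≤ A.card ^ (d - 1) * A.card ^ (d - 2) := by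
    refine (Finset.card_le_card himg).trans ?_
    rw [Finset.card_product, Fintype.card_piFinset, Fintype.card_piFinset]
    apply Nat.mul_le_mul
    · simp [Finset.prod_const]
    · apply le_of_eq
      have : ∀ i : Fin (d-1), (if i = j then ({0} : Finset F) else A).card
          = if i = j then 1 else A.card := by intro i; split <;> simp
      simp only [this]
      rw [← Finset.mul_prod_erase univ _ (mem_univ j), if_pos rfl, one_mul]
      have herase : (univ.erase j).card = d - 2 := by
        rw [Finset.card_erase_of_mem (mem_univ j), Finset.card_univ, Fintype.card_fin]
        omega
      calc ∏ i ∈ univ.erase j, (if i = j then 1 else A.card)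
          = ∏ _i ∈ univ.erase j, A.card :=
            Finset.prod_congr rfl fun i hi => if_neg (Finset.ne_of_mem_erase hi)
        _ = A.card ^ (univ.erase j).card := Finset.prod_const _
        _ = A.card ^ (d - 2) := by rw [herase]
  have hfin : S.card ≤ 2 * A.card ^ (2 * d - 3) := by
    have : A.card ^ (d - 1) * A.card ^ (d - 2) = A.card ^ (2 * d - 3) := by
      rw [← pow_add]; congr 1; omega
    calc S.card ≤ 2 * (S.image f).card := hcard
      _ ≤ 2 * (A.card ^ (d - 1) * A.card ^ (d - 2)) := by
          exact Nat.mul_le_mul_left _ himgcard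
      _ = 2 * A.card ^ (2 * d - 3) := by rw [this]
  calc (S.card : ℝ) ≤ ((2 * A.card ^ (2 * d - 3) : ℕ) : ℝ) := by exact_mod_cast hfin
    _ = 2 * (A.card : ℝ) ^ (2 * d - 3) := by push_cast; ring
end

section
/- Let F_q be a finite field of odd order and A ⊆ F_q with |A| ≥ C·q^{1/2} for a sufficiently large absolute constant C (depending on d). Then for any d ≥ 3, the number of d-tuples (x_1,...,x_d) ∈ A^d such that x_1² + ... + x_d² is a nonzero square in F_q is at least c·|A|^d for some constant c > 0 depending only on d. -/
open Finset

variable {F : Type} [Field F] [Fintype F] [DecidableEq F]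

private lemma chi_mul_shift (hF : ringChar F ≠ 2) {c : F} (hc : c ≠ 0) :
    ∑ r : F, quadraticChar F (r * (r + c)) = -1 := by
  have hJ : jacobiSum (quadraticChar F) (quadraticChar F) = - quadraticChar F (-1) := by
    have h := jacobiSum_nontrivial_inv (quadraticChar_ne_one hF)
    rwa [(quadraticChar_isQuadratic F).inv] at h
  rw [← Equiv.sum_comp (Equiv.mulLeft₀ (-c) (neg_ne_zero.mpr hc))
    (fun r => quadraticChar F (r * (r + c)))]
  have hpt : ∀ x : F, (Equiv.mulLeft₀ (-c) (neg_ne_zero.mpr hc)) x *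
      ((Equiv.mulLeft₀ (-c) (neg_ne_zero.mpr hc)) x + c) = (-1) * c ^ 2 * (x * (1 - x)) := by
    intro x
    simp only [Equiv.mulLeft₀_apply]
    ring
  calc ∑ x : F, quadraticChar F ((Equiv.mulLeft₀ (-c) (neg_ne_zero.mpr hc)) x *
        ((Equiv.mulLeft₀ (-c) (neg_ne_zero.mpr hc)) x + c))
      = ∑ x : F, quadraticChar F (-1) * (quadraticChar F (c ^ 2) *
          (quadraticChar F x * quadraticChar F (1 - x))) := by
        refine Finset.sum_congr rfl fun x _ => ?_
        rw [hpt x, map_mul, map_mul, map_mul, mul_assoc]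
    _ = quadraticChar F (-1) * jacobiSum (quadraticChar F) (quadraticChar F) := by
        rw [← Finset.mul_sum, jacobiSum]
        congr 1
        rw [quadraticChar_sq_one' hc]
        simp [Finset.mul_sum]
    _ = -1 := by
        rw [hJ]
        have := quadraticChar_sq_one (F := F) (a := -1) (by simp)
        nlinarith [this]

private lemma chi_sq_sum (hF : ringChar F ≠ 2) :
    ∑ s : F, (quadraticChar F s) ^ 2 = (Fintype.card F : ℤ) - 1 := by
  have hpt : ∀ s : F, (quadraticChar F s) ^ 2 = 1 - (if s = 0 then (1:ℤ) else 0) := by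
    intro s
    by_cases hs : s = 0
    · simp [hs, quadraticChar_zero]
    · rw [quadraticChar_sq_one hs]
      simp [hs]
  simp_rw [hpt]
  rw [Finset.sum_sub_distrib, Finset.sum_const, Finset.sum_ite_eq' univ (0:F) (fun _ => (1:ℤ))]
  simp [Finset.card_univ]

private lemma chi_pair (hF : ringChar F ≠ 2) (a b : F) :
    ∑ r : F, quadraticChar F (a ^ 2 + r) * quadraticChar F (b ^ 2 + r) =
      if a ^ 2 = b ^ 2 then (Fintype.card F : ℤ) - 1 else -1 := by
  split_ifs with h
  · rw [h]
    calc ∑ r : F, quadraticChar F (b ^ 2 + r) * quadraticChar F (b ^ 2 + r)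
        = ∑ r : F, (quadraticChar F ((Equiv.addLeft (b ^ 2)) r)) ^ 2 := by
          refine Finset.sum_congr rfl fun r _ => ?_
          rw [← pow_two]
          simp [Equiv.coe_addLeft]
      _ = ∑ s : F, (quadraticChar F s) ^ 2 :=
          Equiv.sum_comp (Equiv.addLeft (b ^ 2)) (fun s => (quadraticChar F s) ^ 2)
      _ = (Fintype.card F : ℤ) - 1 := chi_sq_sum hF
  · have hc : b ^ 2 - a ^ 2 ≠ 0 := sub_ne_zero.mpr (Ne.symm h)
    calc ∑ r : F, quadraticChar F (a ^ 2 + r) * quadraticChar F (b ^ 2 + r)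
        = ∑ r : F, quadraticChar F ((Equiv.addLeft (a ^ 2)) r *
            ((Equiv.addLeft (a ^ 2)) r + (b ^ 2 - a ^ 2))) := by
          refine Finset.sum_congr rfl fun r _ => ?_
          rw [← map_mul]
          simp only [Equiv.coe_addLeft]
          congr 1
          ring
      _ = ∑ s : F, quadraticChar F (s * (s + (b ^ 2 - a ^ 2))) :=
          Equiv.sum_comp (Equiv.addLeft (a ^ 2)) (fun s => quadraticChar F (s * (s + (b ^ 2 - a ^ 2))))
      _ = -1 := chi_mul_shift hF hc

private def ind (A : Finset F) (a : F) : ℤ := if a ∈ A then 1 else 0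

private lemma ind_nonneg (A : Finset F) (a : F) : 0 ≤ ind A a := by
  unfold ind; split <;> norm_num

private lemma ind_le_one (A : Finset F) (a : F) : ind A a ≤ 1 := by
  unfold ind; split <;> norm_num

private lemma sum_ind (A : Finset F) : ∑ a : F, ind A a = (A.card : ℤ) := by
  unfold ind
  rw [Finset.sum_ite_mem, Finset.univ_inter, Finset.sum_const]
  simp

private lemma sum_W (A : Finset F) (k : ℕ) :
    ∑ x : Fin k → F, (∏ i, ind A (x i)) = (A.card : ℤ) ^ k := by
  have h := Finset.prod_univ_sum (fun _ : Fin k => (univ : Finset F)) (fun _ a => ind A a)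
  rw [Fintype.piFinset_univ] at h
  rw [← h, Finset.prod_const, sum_ind, Finset.card_univ, Fintype.card_fin]

private lemma W_nonneg (A : Finset F) {k : ℕ} (x : Fin k → F) :
    0 ≤ ∏ i, ind A (x i) :=
  Finset.prod_nonneg fun i _ => ind_nonneg A (x i)

private lemma sq_count_le_two (A : Finset F) (c : F) :
    ∑ a : F, ind A a * (if a ^ 2 = c then (1:ℤ) else 0) ≤ 2 := by
  have h1 : ∑ a : F, ind A a * (if a ^ 2 = c then (1:ℤ) else 0)
      ≤ ∑ a : F, (if a ^ 2 = c then (1:ℤ) else 0) := by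
    refine Finset.sum_le_sum fun a _ => ?_
    have h2 := ind_le_one A a
    have h3 := ind_nonneg A a
    split <;> nlinarith
  refine h1.trans ?_
  have h4 : ∑ a : F, (if a ^ 2 = c then (1:ℤ) else 0)
      = (((univ : Finset F).filter fun a => a ^ 2 = c).card : ℤ) := by
    rw [Finset.sum_boole]
  rw [h4]
  have h5 : ((univ : Finset F).filter fun a => a ^ 2 = c).card ≤ 2 := by
    by_cases h : ((univ : Finset F).filter fun a => a ^ 2 = c).Nonempty
    · obtain ⟨r, hr⟩ := h
      simp only [Finset.mem_filter, Finset.mem_univ, true_and] at hr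
      have hsub : ((univ : Finset F).filter fun a => a ^ 2 = c) ⊆ {r, -r} := by
        intro a ha
        simp only [Finset.mem_filter, Finset.mem_univ, true_and] at ha
        have h6 : (a - r) * (a + r) = 0 := by
          have : a ^ 2 - r ^ 2 = 0 := by rw [ha, hr, sub_self]
          calc (a - r) * (a + r) = a ^ 2 - r ^ 2 := by ring
            _ = 0 := this
        rcases mul_eq_zero.mp h6 with h7 | h7
        · simp [sub_eq_zero.mp h7]
        · simp [eq_neg_of_add_eq_zero_left h7]
      calc ((univ : Finset F).filter fun a => a ^ 2 = c).card
          ≤ ({r, -r} : Finset F).card := Finset.card_le_card hsub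
        _ ≤ 2 := (Finset.card_insert_le _ _).trans (by simp)
    · rw [Finset.not_nonempty_iff_eq_empty.mp h]
      simp
  exact_mod_cast h5

private lemma sum_split (A : Finset F) (k : ℕ) (φ : F → ℤ) :
    ∑ x : Fin (k+1) → F, (∏ i, ind A (x i)) * φ (∑ i, x i ^ 2)
      = ∑ a : F, ind A a * ∑ y : Fin k → F, (∏ i, ind A (y i)) * φ (a ^ 2 + ∑ i, y i ^ 2) := by
  rw [← Equiv.sum_comp (Fin.consEquiv fun _ : Fin (k+1) => F)
    (fun x => (∏ i, ind A (x i)) * φ (∑ i, x i ^ 2)), Fintype.sum_prod_type]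
  refine Finset.sum_congr rfl fun a _ => ?_
  rw [Finset.mul_sum]
  refine Finset.sum_congr rfl fun y _ => ?_
  simp only [Fin.consEquiv_apply]
  rw [Fin.prod_univ_succ, Fin.sum_univ_succ]
  simp only [Fin.cons_zero, Fin.cons_succ, mul_assoc]

private lemma count_le (A : Finset F) (k : ℕ) (t : F) :
    ∑ x : Fin (k+1) → F, (∏ i, ind A (x i)) * (if ∑ i, x i ^ 2 = t then (1:ℤ) else 0)
      ≤ 2 * (A.card : ℤ) ^ k := by
  rw [sum_split A k (fun u => if u = t then (1:ℤ) else 0)]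
  have hswap : ∑ a : F, ind A a * ∑ y : Fin k → F, (∏ i, ind A (y i)) *
        (if a ^ 2 + ∑ i, y i ^ 2 = t then (1:ℤ) else 0)
      = ∑ y : Fin k → F, (∏ i, ind A (y i)) *
        ∑ a : F, ind A a * (if a ^ 2 = t - ∑ i, y i ^ 2 then (1:ℤ) else 0) := by
    simp_rw [Finset.mul_sum]
    rw [Finset.sum_comm]
    refine Finset.sum_congr rfl fun y _ => Finset.sum_congr rfl fun a _ => ?_
    rw [show (if a ^ 2 + ∑ i, y i ^ 2 = t then (1:ℤ) else 0)
        = (if a ^ 2 = t - ∑ i, y i ^ 2 then (1:ℤ) else 0) from by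
      refine if_congr ?_ rfl rfl
      constructor
      · intro h; rw [← h]; ring
      · intro h; rw [h]; ring]
    ring
  rw [hswap]
  calc ∑ y : Fin k → F, (∏ i, ind A (y i)) *
        ∑ a : F, ind A a * (if a ^ 2 = t - ∑ i, y i ^ 2 then (1:ℤ) else 0)
      ≤ ∑ y : Fin k → F, (∏ i, ind A (y i)) * 2 := by
        refine Finset.sum_le_sum fun y _ => ?_
        exact mul_le_mul_of_nonneg_left (sq_count_le_two A _) (W_nonneg A y)
    _ = 2 * (A.card : ℤ) ^ k := by
        rw [← Finset.sum_mul, sum_W, mul_comm]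

private lemma decomp (A : Finset F) (e : ℕ) :
    ∑ x : Fin (e+1) → F, (∏ i, ind A (x i)) * (quadraticChar F (∑ i, x i ^ 2) : ℤ)
      = ∑ r : F, (∑ y : Fin e → F, (∏ i, ind A (y i)) * (if ∑ i, y i ^ 2 = r then (1:ℤ) else 0))
          * (∑ a : F, ind A a * (quadraticChar F (a ^ 2 + r) : ℤ)) := by
  rw [sum_split A e (fun u => (quadraticChar F u : ℤ))]
  have hrhs : ∀ r : F,
      (∑ y : Fin e → F, (∏ i, ind A (y i)) * (if ∑ i, y i ^ 2 = r then (1:ℤ) else 0))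
          * (∑ a : F, ind A a * (quadraticChar F (a ^ 2 + r) : ℤ))
      = ∑ y : Fin e → F, ∑ a : F, (if ∑ i, y i ^ 2 = r then
          ind A a * ((∏ i, ind A (y i)) * (quadraticChar F (a ^ 2 + r) : ℤ)) else 0) := by
    intro r
    rw [Finset.sum_mul]
    refine Finset.sum_congr rfl fun y _ => ?_
    rw [Finset.mul_sum]
    refine Finset.sum_congr rfl fun a _ => ?_
    split <;> ring
  simp_rw [hrhs]
  rw [Finset.sum_comm]
  have hlhs : ∀ a : F, ind A a * ∑ y : Fin e → F, (∏ i, ind A (y i)) *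
        (quadraticChar F (a ^ 2 + ∑ i, y i ^ 2) : ℤ)
      = ∑ y : Fin e → F, ind A a * ((∏ i, ind A (y i)) *
        (quadraticChar F (a ^ 2 + ∑ i, y i ^ 2) : ℤ)) := fun a => Finset.mul_sum _ _ _
  simp_rw [hlhs]
  rw [Finset.sum_comm]
  refine Finset.sum_congr rfl fun y _ => ?_
  rw [Finset.sum_comm]
  refine Finset.sum_congr rfl fun a _ => ?_
  rw [Finset.sum_ite_eq (univ : Finset F) (∑ i, y i ^ 2)
    (fun r => ind A a * ((∏ i, ind A (y i)) * (quadraticChar F (a ^ 2 + r) : ℤ)))]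
  simp only [Finset.mem_univ, if_true]


private lemma sum_g_sq (hF : ringChar F ≠ 2) (A : Finset F) :
    ∑ r : F, (∑ a : F, ind A a * (quadraticChar F (a ^ 2 + r) : ℤ)) ^ 2
      ≤ 2 * (Fintype.card F : ℤ) * (A.card : ℤ) := by
  have hexp : ∀ r : F, (∑ a : F, ind A a * (quadraticChar F (a ^ 2 + r) : ℤ)) ^ 2
      = ∑ a : F, ∑ b : F, (ind A a * (quadraticChar F (a ^ 2 + r) : ℤ)) *
          (ind A b * (quadraticChar F (b ^ 2 + r) : ℤ)) := by
    intro r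
    rw [pow_two, Finset.sum_mul_sum]
  simp_rw [hexp]
  rw [Finset.sum_comm]
  have hswap2 : ∀ a : F, ∑ r : F, ∑ b : F, (ind A a * (quadraticChar F (a ^ 2 + r) : ℤ)) *
        (ind A b * (quadraticChar F (b ^ 2 + r) : ℤ))
      = ∑ b : F, ind A a * ind A b *
          (if a ^ 2 = b ^ 2 then (Fintype.card F : ℤ) - 1 else -1) := by
    intro a
    rw [Finset.sum_comm]
    refine Finset.sum_congr rfl fun b _ => ?_
    rw [← chi_pair hF a b, Finset.mul_sum]
    refine Finset.sum_congr rfl fun r _ => ?_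
    ring
  simp_rw [hswap2]
  have hpt : ∀ a b : F, ind A a * ind A b *
        (if a ^ 2 = b ^ 2 then (Fintype.card F : ℤ) - 1 else -1)
      ≤ (Fintype.card F : ℤ) * (ind A a * (ind A b * (if b ^ 2 = a ^ 2 then (1:ℤ) else 0))) := by
    intro a b
    have h1 := ind_nonneg A a
    have h2 := ind_nonneg A b
    have hq : (0:ℤ) ≤ (Fintype.card F : ℤ) := by positivity
    by_cases h : a ^ 2 = b ^ 2
    · rw [if_pos h, if_pos h.symm]
      nlinarith
    · rw [if_neg h, if_neg (fun hh => h hh.symm)]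
      nlinarith
  calc ∑ a : F, ∑ b : F, ind A a * ind A b *
        (if a ^ 2 = b ^ 2 then (Fintype.card F : ℤ) - 1 else -1)
      ≤ ∑ a : F, ∑ b : F, (Fintype.card F : ℤ) *
          (ind A a * (ind A b * (if b ^ 2 = a ^ 2 then (1:ℤ) else 0))) :=
        Finset.sum_le_sum fun a _ => Finset.sum_le_sum fun b _ => hpt a b
    _ = ∑ a : F, (Fintype.card F : ℤ) *
          (ind A a * ∑ b : F, ind A b * (if b ^ 2 = a ^ 2 then (1:ℤ) else 0)) := by
        refine Finset.sum_congr rfl fun a _ => ?_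
        rw [Finset.mul_sum, Finset.mul_sum]
    _ ≤ ∑ a : F, (Fintype.card F : ℤ) * (ind A a * 2) := by
        refine Finset.sum_le_sum fun a _ => ?_
        have hq : (0:ℤ) ≤ (Fintype.card F : ℤ) := by positivity
        have := sq_count_le_two A (a ^ 2)
        have h1 := ind_nonneg A a
        exact mul_le_mul_of_nonneg_left (mul_le_mul_of_nonneg_left this h1) hq
    _ ≤ 2 * (Fintype.card F : ℤ) * (A.card : ℤ) := by
        have : ∑ a : F, (Fintype.card F : ℤ) * (ind A a * 2)
            = 2 * (Fintype.card F : ℤ) * ∑ a : F, ind A a := by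
          rw [Finset.mul_sum]
          refine Finset.sum_congr rfl fun a _ => ?_
          ring
        rw [this, sum_ind]

private lemma sum_m (A : Finset F) (e : ℕ) :
    ∑ r : F, (∑ y : Fin e → F, (∏ i, ind A (y i)) * (if ∑ i, y i ^ 2 = r then (1:ℤ) else 0))
      = (A.card : ℤ) ^ e := by
  rw [Finset.sum_comm]
  rw [← sum_W A e]
  refine Finset.sum_congr rfl fun y _ => ?_
  rw [← Finset.mul_sum, Finset.sum_ite_eq (univ : Finset F) (∑ i, y i ^ 2) (fun _ => (1:ℤ))]
  simp

private lemma m_nonneg (A : Finset F) (e : ℕ) (r : F) :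
    0 ≤ ∑ y : Fin e → F, (∏ i, ind A (y i)) * (if ∑ i, y i ^ 2 = r then (1:ℤ) else 0) :=
  Finset.sum_nonneg fun y _ => by
    have := W_nonneg A y; split <;> nlinarith

private lemma chi_one_iff (t : F) :
    quadraticChar F t = 1 ↔ ∃ s : F, s ≠ 0 ∧ t = s ^ 2 := by
  constructor
  · intro h
    have ht : t ≠ 0 := by
      intro h0
      rw [h0, quadraticChar_zero] at h
      exact one_ne_zero h.symm
    obtain ⟨r, hr⟩ := (quadraticChar_one_iff_isSquare ht).mp h
    have hrne : r ≠ 0 := by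
      intro h0
      rw [h0, mul_zero] at hr
      exact ht hr
    exact ⟨r, hrne, by rw [hr, pow_two]⟩
  · rintro ⟨s, hs, rfl⟩
    exact quadraticChar_sq_one' hs

private lemma card_eq (A : Finset F) (k : ℕ) :
    ((Finset.univ.filter (fun x : Fin k → F =>
        (∀ i, x i ∈ A) ∧ ∃ s : F, s ≠ 0 ∧ ∑ i, (x i) ^ 2 = s ^ 2)).card : ℤ)
      = ∑ x : Fin k → F, (∏ i, ind A (x i)) *
          (if quadraticChar F (∑ i, x i ^ 2) = 1 then (1:ℤ) else 0) := by
  rw [Finset.card_filter]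
  push_cast
  refine Finset.sum_congr rfl fun x _ => ?_
  by_cases h1 : ∀ i, x i ∈ A
  · have hW : (∏ i, ind A (x i)) = 1 :=
      Finset.prod_eq_one fun i _ => by simp [ind, h1 i]
    rw [hW, one_mul]
    by_cases h2 : quadraticChar F (∑ i, x i ^ 2) = 1
    · rw [if_pos h2, if_pos ⟨h1, (chi_one_iff _).mp h2⟩]
    · rw [if_neg h2, if_neg]
      rintro ⟨-, hs⟩
      exact h2 ((chi_one_iff _).mpr hs)
  · rw [if_neg (fun h => h1 h.1)]
    obtain ⟨i, hi⟩ := not_forall.mp h1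
    have : ind A (x i) = 0 := by simp [ind, hi]
    rw [Finset.prod_eq_zero (Finset.mem_univ i) this, zero_mul]

private lemma main_identity (hF : ringChar F ≠ 2) (A : Finset F) (k : ℕ) :
    2 * ∑ x : Fin k → F, (∏ i, ind A (x i)) *
        (if quadraticChar F (∑ i, x i ^ 2) = 1 then (1:ℤ) else 0)
      = (A.card : ℤ) ^ k
        + ∑ x : Fin k → F, (∏ i, ind A (x i)) * (quadraticChar F (∑ i, x i ^ 2) : ℤ)
        - ∑ x : Fin k → F, (∏ i, ind A (x i)) * (if ∑ i, x i ^ 2 = 0 then (1:ℤ) else 0) := by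
  have hpt : ∀ t : F, 2 * (if quadraticChar F t = 1 then (1:ℤ) else 0)
      = 1 + (quadraticChar F t : ℤ) - (if t = 0 then (1:ℤ) else 0) := by
    intro t
    by_cases ht : t = 0
    · simp [ht, quadraticChar_zero]
    · rcases quadraticChar_dichotomy ht with h | h <;> rw [h] <;> simp [ht] <;> split <;> omega
  have : 2 * ∑ x : Fin k → F, (∏ i, ind A (x i)) *
        (if quadraticChar F (∑ i, x i ^ 2) = 1 then (1:ℤ) else 0)
      = ∑ x : Fin k → F, ((∏ i, ind A (x i))
          + (∏ i, ind A (x i)) * (quadraticChar F (∑ i, x i ^ 2) : ℤ)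
          - (∏ i, ind A (x i)) * (if ∑ i, x i ^ 2 = 0 then (1:ℤ) else 0)) := by
    rw [Finset.mul_sum]
    refine Finset.sum_congr rfl fun x _ => ?_
    have h := hpt (∑ i, x i ^ 2)
    calc 2 * ((∏ i, ind A (x i)) *
          (if quadraticChar F (∑ i, x i ^ 2) = 1 then (1:ℤ) else 0))
        = (∏ i, ind A (x i)) *
            (2 * (if quadraticChar F (∑ i, x i ^ 2) = 1 then (1:ℤ) else 0)) := by ring
      _ = (∏ i, ind A (x i)) * (1 + (quadraticChar F (∑ i, x i ^ 2) : ℤ)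
            - (if ∑ i, x i ^ 2 = 0 then (1:ℤ) else 0)) := by rw [h]
      _ = (∏ i, ind A (x i))
            + (∏ i, ind A (x i)) * (quadraticChar F (∑ i, x i ^ 2) : ℤ)
            - (∏ i, ind A (x i)) * (if ∑ i, x i ^ 2 = 0 then (1:ℤ) else 0) := by ring
  rw [this, Finset.sum_sub_distrib, Finset.sum_add_distrib, sum_W]


/-- For `d ≥ 3` there are constants `C, c > 0` such that for any `A ⊆ F_q` with
`|A| ≥ C√q`, the number of `d`-tuples in `A^d` whose sum of squares is a nonzero square
is at least `c|A|^d`. -/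
theorem many_square_sum_type_tuples (d : ℕ) (hd : 3 ≤ d) :
    ∃ C c : ℝ, 0 < C ∧ 0 < c ∧
      ∀ (F : Type) [Field F] [Fintype F] [DecidableEq F],
        Odd (Fintype.card F) →
        ∀ A : Finset F,
          C * Real.sqrt (Fintype.card F) ≤ A.card →
          c * (A.card : ℝ) ^ d ≤
            ((Finset.univ.filter (fun x : Fin d → F =>
                (∀ i, x i ∈ A) ∧ ∃ s : F, s ≠ 0 ∧ ∑ i, (x i) ^ 2 = s ^ 2)).card : ℝ) := by
  obtain ⟨f, rfl⟩ : ∃ f, d = f + 2 := ⟨d - 2, by omega⟩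
  refine ⟨8, 1/4, by norm_num, by norm_num, ?_⟩
  intro F _ _ _ hodd A hA
  have hF : ringChar F ≠ 2 := by
    intro h
    have h2 := FiniteField.even_card_of_char_two h
    have h3 := Nat.odd_iff.mp hodd
    omega
  set M : ℤ := (A.card : ℤ) with hMdef
  set q : ℤ := (Fintype.card F : ℤ) with hqdef
  set Si : ℤ := ∑ x : Fin (f+2) → F, (∏ i, ind A (x i)) *
    (quadraticChar F (∑ i, x i ^ 2) : ℤ) with hSidef
  set Zi : ℤ := ∑ x : Fin (f+2) → F, (∏ i, ind A (x i)) *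
    (if ∑ i, x i ^ 2 = 0 then (1:ℤ) else 0) with hZidef
  set Ni : ℤ := ((Finset.univ.filter (fun x : Fin (f+2) → F =>
    (∀ i, x i ∈ A) ∧ ∃ s : F, s ≠ 0 ∧ ∑ i, (x i) ^ 2 = s ^ 2)).card : ℤ) with hNidef
  -- integer identity
  have hid : 2 * Ni = M ^ (f+2) + Si - Zi := by
    rw [hNidef, card_eq A (f+2)]
    exact main_identity hF A (f+2)
  -- Z bound
  have hZ : Zi ≤ 2 * M ^ (f+1) := count_le A (f+1) 0
  -- Sigma bound
  have hS : Si ^ 2 ≤ 4 * q * (M ^ (f+1)) ^ 2 := by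
    have hdec : Si = ∑ r : F,
        (∑ y : Fin (f+1) → F, (∏ i, ind A (y i)) * (if ∑ i, y i ^ 2 = r then (1:ℤ) else 0))
          * (∑ a : F, ind A a * (quadraticChar F (a ^ 2 + r) : ℤ)) := decomp A (f+1)
    have hcs := Finset.sum_mul_sq_le_sq_mul_sq (univ : Finset F)
      (fun r => ∑ y : Fin (f+1) → F, (∏ i, ind A (y i)) *
        (if ∑ i, y i ^ 2 = r then (1:ℤ) else 0))
      (fun r => ∑ a : F, ind A a * (quadraticChar F (a ^ 2 + r) : ℤ))
    have hm2 : ∑ r : F, (∑ y : Fin (f+1) → F, (∏ i, ind A (y i)) *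
          (if ∑ i, y i ^ 2 = r then (1:ℤ) else 0)) ^ 2 ≤ 2 * M ^ f * M ^ (f+1) := by
      calc ∑ r : F, (∑ y : Fin (f+1) → F, (∏ i, ind A (y i)) *
            (if ∑ i, y i ^ 2 = r then (1:ℤ) else 0)) ^ 2
          ≤ ∑ r : F, (2 * M ^ f) * (∑ y : Fin (f+1) → F, (∏ i, ind A (y i)) *
            (if ∑ i, y i ^ 2 = r then (1:ℤ) else 0)) := by
            refine Finset.sum_le_sum fun r _ => ?_
            rw [pow_two]
            exact mul_le_mul_of_nonneg_right (count_le A f r) (m_nonneg A (f+1) r)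
        _ = 2 * M ^ f * M ^ (f+1) := by rw [← Finset.mul_sum, sum_m A (f+1)]
    have hg2 : ∑ r : F, (∑ a : F, ind A a * (quadraticChar F (a ^ 2 + r) : ℤ)) ^ 2
        ≤ 2 * q * M := sum_g_sq hF A
    have hg2nn : (0:ℤ) ≤ ∑ r : F, (∑ a : F, ind A a * (quadraticChar F (a ^ 2 + r) : ℤ)) ^ 2 :=
      Finset.sum_nonneg fun r _ => sq_nonneg _
    have hMnn : (0:ℤ) ≤ M := by positivity
    have hfin : (2 * M ^ f * M ^ (f+1)) * (2 * q * M) = 4 * q * (M ^ (f+1)) ^ 2 := by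
      have hMM : M ^ f * M = M ^ (f+1) := (pow_succ M f).symm
      rw [← hMM]; ring
    calc Si ^ 2
        ≤ (∑ r : F, (∑ y : Fin (f+1) → F, (∏ i, ind A (y i)) *
              (if ∑ i, y i ^ 2 = r then (1:ℤ) else 0)) ^ 2)
            * ∑ r : F, (∑ a : F, ind A a * (quadraticChar F (a ^ 2 + r) : ℤ)) ^ 2 := by
          rw [hdec]; exact hcs
      _ ≤ (2 * M ^ f * M ^ (f+1)) * (2 * q * M) := by
          refine mul_le_mul hm2 hg2 hg2nn ?_
          positivity
      _ = 4 * q * (M ^ (f+1)) ^ 2 := hfin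
  -- move to ℝ
  have hq0 : (0:ℝ) ≤ (Fintype.card F : ℝ) := by positivity
  have hq1 : (1:ℝ) ≤ Real.sqrt (Fintype.card F) := by
    have h2 : (1:ℝ) ≤ (Fintype.card F : ℝ) := by
      exact_mod_cast Nat.one_le_iff_ne_zero.mpr Fintype.card_ne_zero
    calc (1:ℝ) = Real.sqrt 1 := Real.sqrt_one.symm
      _ ≤ Real.sqrt (Fintype.card F) := Real.sqrt_le_sqrt h2
  set Qr : ℝ := Real.sqrt (Fintype.card F) with hQrdef
  have hQsq : Qr ^ 2 = (Fintype.card F : ℝ) := Real.sq_sqrt hq0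
  have hMr0 : (0:ℝ) ≤ (A.card : ℝ) := by positivity
  set P : ℝ := (A.card : ℝ) ^ (f+1) with hPdef
  have hP : 0 ≤ P := by positivity
  -- cast bounds
  have hZr : (Zi : ℝ) ≤ 2 * P := by
    have := hZ
    rw [hMdef] at this
    have h2 : ((Zi : ℤ) : ℝ) ≤ ((2 * (A.card : ℤ) ^ (f+1) : ℤ) : ℝ) := by exact_mod_cast this
    rw [hPdef]; push_cast at h2 ⊢; linarith
  have hSr : ((Si : ℤ) : ℝ) ^ 2 ≤ (2 * Qr * P) ^ 2 := by
    have h2 : ((Si : ℤ) : ℝ) ^ 2 ≤ 4 * (Fintype.card F : ℝ) * ((A.card : ℝ) ^ (f+1)) ^ 2 := by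
      have h0 := hS
      rw [hqdef, hMdef] at h0
      exact_mod_cast h0
    have h3 : (2 * Qr * P) ^ 2 = 4 * (Qr ^ 2) * P ^ 2 := by ring
    rw [h3, hQsq, hPdef]
    calc ((Si : ℤ) : ℝ) ^ 2
        ≤ 4 * (Fintype.card F : ℝ) * ((A.card : ℝ) ^ (f+1)) ^ 2 := h2
      _ = 4 * (Fintype.card F : ℝ) * ((A.card : ℝ) ^ (f+1)) ^ 2 := rfl
  have hSrlow : -(2 * Qr * P) ≤ ((Si : ℤ) : ℝ) := by
    have hb : (0:ℝ) ≤ 2 * Qr * P := by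
      have : (0:ℝ) ≤ Qr := Real.sqrt_nonneg _
      positivity
    nlinarith [hSr, sq_nonneg (((Si : ℤ) : ℝ) + 2 * Qr * P)]
  -- cast identity
  have hidr : 2 * ((Ni : ℤ) : ℝ) = (A.card : ℝ) ^ (f+2) + ((Si : ℤ) : ℝ) - ((Zi : ℤ) : ℝ) := by
    have h2 : ((2 * Ni : ℤ) : ℝ) = ((M ^ (f+2) + Si - Zi : ℤ) : ℝ) := by exact_mod_cast hid
    rw [hMdef] at h2
    push_cast at h2
    linarith
  -- final arithmetic
  have hA' : 8 * Qr ≤ (A.card : ℝ) := hA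
  have hpow : (A.card : ℝ) ^ (f+2) = (A.card : ℝ) * P := by
    rw [hPdef, pow_succ]; ring
  have hNr : ((Ni : ℤ) : ℝ) = ((Finset.univ.filter (fun x : Fin (f+2) → F =>
      (∀ i, x i ∈ A) ∧ ∃ s : F, s ≠ 0 ∧ ∑ i, (x i) ^ 2 = s ^ 2)).card : ℝ) := by
    rw [hNidef]; push_cast; ring
  rw [← hNr]
  have key : 8 * Qr * P ≤ (A.card : ℝ) * P := mul_le_mul_of_nonneg_right hA' hP
  have key2 : 1 * P ≤ Qr * P := mul_le_mul_of_nonneg_right hq1 hP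
  rw [hpow] at hidr
  linarith
end
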